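/- arXiv:2211.12836 — 9 statements merged into one kernel-verified Lean document; each statement's English description precedes it below -/
import Mathlib

section
/- For every v ∈ V one has s_v h^r = h^l(v)·h^r and s_vᵀ h^l = h^l(v)·h^l; that is, the common left and right Perron–Frobenius eigenvectors of A are left and right eigenvectors of every s_v, with eigenvalue h^l(v). -/
noncomputable section

open Finset Matrix

namespace Paper

/-- for a positively multiplicative graph, the Perron–Frobenius vectors `h^r, h^l`
of `A` are right and left eigenvectors of every `s_v`, with eigenvalue `h^l(v)`. -/
theorem stmt1 {V : Type*} [Fintype V] [DecidableEq V] [Nonempty V]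
    (v0 : V) (A : Matrix V V ℝ) (lam : ℝ) (hl hr : V → ℝ)
    (hlpos : ∀ v, 0 < hl v) (hrpos : ∀ v, 0 < hr v)
    (hAr : A.mulVec hr = lam • hr)
    (hAl : Aᵀ.mulVec hl = lam • hl)
    (hrdim : ∀ x : V → ℝ, A.mulVec x = lam • x → ∃ c : ℝ, x = c • hr)
    (hldim : ∀ x : V → ℝ, Aᵀ.mulVec x = lam • x → ∃ c : ℝ, x = c • hl)
    (hnorm0 : hl v0 = 1) (hnorm1 : (∑ v, hl v * hr v) = 1)
    (s : V → Matrix V V ℝ)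
    (hcomm : ∀ v, s v * A = A * s v)
    (hse : ∀ v, (s v).mulVec (Pi.single v0 1) = Pi.single v 1) :
    ∀ v, (s v).mulVec hr = hl v • hr ∧ (s v)ᵀ.mulVec hl = hl v • hl := by
  intro v
  -- s v preserves the right eigenspace
  have h1 : A.mulVec ((s v).mulVec hr) = lam • ((s v).mulVec hr) := by
    rw [Matrix.mulVec_mulVec, ← hcomm v, ← Matrix.mulVec_mulVec, hAr,
      Matrix.mulVec_smul]
  obtain ⟨c, hc⟩ := hrdim _ h1
  -- (s v)ᵀ preserves the left eigenspace
  have h2 : Aᵀ.mulVec ((s v)ᵀ.mulVec hl) = lam • ((s v)ᵀ.mulVec hl) := by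
    rw [Matrix.mulVec_mulVec, ← Matrix.transpose_mul, hcomm v,
      Matrix.transpose_mul, ← Matrix.mulVec_mulVec, hAl, Matrix.mulVec_smul]
  obtain ⟨d, hd⟩ := hldim _ h2
  have hlr : hl ⬝ᵥ hr = 1 := hnorm1
  -- d = hl v
  have hdval : d = hl v := by
    have e1 : ((s v)ᵀ.mulVec hl) ⬝ᵥ (Pi.single v0 1) = hl ⬝ᵥ Pi.single v 1 := by
      rw [Matrix.mulVec_transpose, ← Matrix.dotProduct_mulVec, hse v]
    rw [hd] at e1
    simpa [dotProduct_single, hnorm0] using e1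
  -- c = d
  have hcd : c = d := by
    have e2 : hl ⬝ᵥ ((s v).mulVec hr) = ((s v)ᵀ.mulVec hl) ⬝ᵥ hr := by
      rw [Matrix.mulVec_transpose, ← Matrix.dotProduct_mulVec]
    rw [hc, hd] at e2
    simpa [dotProduct_smul, smul_dotProduct, hlr] using e2
  constructor
  · rw [hc, hcd, hdval]
  · rw [hd, hdval]

end Paper
end
end

section
/- For all functions x, y, z: V → ℂ: (i) M^h(x*y) = M^h(x)·M^h(y) (matrix product), M^h is injective, and * is commutative and associative (so (ℂ^V, +, *) is a commutative algebra isomorphic via M^h to the algebra spanned by the matrices s_v^h); (ii) if x and y take nonnegative real values and Σ_v μ^h(v)x(v) = Σ_v μ^h(v)y(v) = 1, then x*y takes nonnegative real values and Σ_v μ^h(v)(x*y)(v) = 1, i.e. the set of h-probability measures is stable under convolution. -/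
noncomputable section

open Finset Matrix

namespace Paper

variable {V : Type*}

/-- The h-transform `s^h = D_r⁻¹ s D_r` of a real matrix, as a complex matrix. -/
def svh [Fintype V] (s : Matrix V V ℝ) (hr : V → ℝ) : Matrix V V ℂ :=
  Matrix.of fun w w' => ((s w w' * hr w' / hr w : ℝ) : ℂ)

/-- The convolution `x*y = Σ_v h^r(v) x(v) · (s_v^h y)`. -/
def conv [Fintype V] (s : V → Matrix V V ℝ) (hr : V → ℝ) (x y : V → ℂ) : V → ℂ :=
  fun w => ∑ v, (hr v : ℂ) * x v * (svh (s v) hr).mulVec y w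

/-- The map `M^h(x) = Σ_v μ^h(v) x(v) P^v`, where `P^v = s_v^h / h^l(v)`. -/
def Mh [Fintype V] (s : V → Matrix V V ℝ) (hl hr : V → ℝ) (x : V → ℂ) :
    Matrix V V ℂ :=
  ∑ v, (((hl v * hr v : ℝ) : ℂ) * x v) • (((hl v : ℝ) : ℂ)⁻¹ • svh (s v) hr)

/-- `M^h` intertwines the convolution with the matrix product and is injective,
the convolution is commutative and associative, and h-probability measures are stable under
convolution. -/
theorem stmt3 [Fintype V] [DecidableEq V] [Nonempty V] (v0 : V)
    (s : V → Matrix V V ℝ)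
    (hsnn : ∀ v w w', 0 ≤ s v w w')
    (hscomm : ∀ v v', s v * s v' = s v' * s v)
    (hind : LinearIndependent ℝ s)
    (hclos : ∀ v v', ∃ c : V → ℝ, (∀ w, 0 ≤ c w) ∧ s v * s v' = ∑ w, c w • s w)
    (hse : ∀ v, (s v).mulVec (Pi.single v0 1) = Pi.single v 1)
    (hl hr : V → ℝ) (hlpos : ∀ v, 0 < hl v) (hrpos : ∀ v, 0 < hr v)
    (hnorm0 : hl v0 = 1) (hnorm1 : (∑ v, hl v * hr v) = 1)
    (hPFr : ∀ v, (s v).mulVec hr = hl v • hr)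
    (hPFl : ∀ v, (s v)ᵀ.mulVec hl = hl v • hl) :
    (∀ x y, Mh s hl hr (conv s hr x y) = Mh s hl hr x * Mh s hl hr y) ∧
    Function.Injective (Mh s hl hr) ∧
    (∀ x y, conv s hr x y = conv s hr y x) ∧
    (∀ x y z, conv s hr (conv s hr x y) z = conv s hr x (conv s hr y z)) ∧
    (∀ x y : V → ℂ,
      (∀ v, (x v).im = 0 ∧ 0 ≤ (x v).re) → (∀ v, (y v).im = 0 ∧ 0 ≤ (y v).re) →
      (∑ v, ((hl v * hr v : ℝ) : ℂ) * x v) = 1 → (∑ v, ((hl v * hr v : ℝ) : ℂ) * y v) = 1 →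
      (∀ v, ((conv s hr x y) v).im = 0 ∧ 0 ≤ ((conv s hr x y) v).re) ∧
        (∑ v, ((hl v * hr v : ℝ) : ℂ) * conv s hr x y v) = 1) := by
  -- nonvanishing facts
  have hrne : ∀ v, hr v ≠ 0 := fun v => (hrpos v).ne'
  have hrneC : ∀ v, ((hr v : ℝ) : ℂ) ≠ 0 := fun v => by exact_mod_cast hrne v
  have hlneC : ∀ v, ((hl v : ℝ) : ℂ) ≠ 0 := fun v => by exact_mod_cast (hlpos v).ne'
  set t : V → Matrix V V ℂ := fun v => svh (s v) hr with htdef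
  have tapp : ∀ (v a b : V), t v a b = ((s v a b * hr b / hr a : ℝ) : ℂ) := fun v a b => rfl
  -- column v0 of s v is the delta at v
  have sdelta : ∀ v w, s v w v0 = if w = v then 1 else 0 := by
    intro v w
    have h := congrFun (hse v) w
    simpa [Matrix.mulVec, dotProduct, Pi.single_apply] using h
  -- structure constants
  have hmulE : ∀ u v a b, (s u * s v) a b = ∑ w, s u w v * s w a b := by
    intro u v a b
    obtain ⟨c, -, hc⟩ := hclos u v
    have hcw : ∀ w, c w = s u w v := by
      intro w
      have h := congrFun (congrFun hc w) v0
      rw [Matrix.mul_apply] at h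
      simp [Matrix.sum_apply, sdelta] at h
      exact h.symm
    have h := congrFun (congrFun hc a) b
    rw [h]
    simp only [Matrix.sum_apply, Matrix.smul_apply, smul_eq_mul]
    exact Finset.sum_congr rfl fun w _ => by rw [hcw]
  have tmulC : ∀ u v a b, ∑ c, t u a c * t v c b = (((s u * s v) a b * hr b / hr a : ℝ) : ℂ) := by
    intro u v a b
    have hre : ∑ c, (s u a c * hr c / hr a) * (s v c b * hr b / hr c)
        = (s u * s v) a b * hr b / hr a := by
      rw [Matrix.mul_apply, Finset.sum_mul, Finset.sum_div]
      exact Finset.sum_congr rfl fun c _ => by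
        field_simp [hrne a, hrne c]
    simp only [tapp]
    exact_mod_cast hre
  have tmul : ∀ u v, t u * t v = ∑ w, ((s u w v : ℝ) : ℂ) • t w := by
    intro u v
    ext a b
    rw [Matrix.mul_apply, tmulC]
    simp only [Matrix.sum_apply, Matrix.smul_apply, smul_eq_mul, tapp]
    have hre : (s u * s v) a b * hr b / hr a = ∑ w, s u w v * (s w a b * hr b / hr a) := by
      rw [hmulE u v a b, Finset.sum_mul, Finset.sum_div]
      exact Finset.sum_congr rfl fun w _ => by ring
    exact_mod_cast hre
  have tcomm : ∀ u v, t u * t v = t v * t u := by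
    intro u v
    ext a b
    rw [Matrix.mul_apply, Matrix.mul_apply, tmulC, tmulC, hscomm]
  have Mh_eq : ∀ x : V → ℂ, Mh s hl hr x = ∑ v, ((hr v : ℂ) * x v) • t v := by
    intro x
    unfold Mh
    refine Finset.sum_congr rfl fun v _ => ?_
    rw [smul_smul]
    congr 1
    have h := hlneC v
    push_cast
    field_simp
  have conv_simp : ∀ x y w, conv s hr x y w = ∑ u, ∑ v, (hr u : ℂ) * x u * (t u w v * y v) := by
    intro x y w
    unfold conv
    refine Finset.sum_congr rfl fun u _ => ?_
    simp only [Matrix.mulVec, dotProduct]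
    rw [Finset.mul_sum]
  -- multiplicativity of Mh
  have Mh_conv : ∀ x y, Mh s hl hr (conv s hr x y) = Mh s hl hr x * Mh s hl hr y := by
    intro x y
    rw [Mh_eq, Mh_eq, Mh_eq, Finset.sum_mul]
    have step1 : ∀ u, (((hr u : ℂ) * x u) • t u) * (∑ v, ((hr v : ℂ) * y v) • t v)
        = ∑ v, ∑ w, ((hr u : ℂ) * x u * ((hr v : ℂ) * y v) * ((s u w v : ℝ) : ℂ)) • t w := by
      intro u
      rw [Finset.mul_sum]
      refine Finset.sum_congr rfl fun v _ => ?_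
      rw [smul_mul_assoc, mul_smul_comm, smul_smul, tmul, Finset.smul_sum]
      exact Finset.sum_congr rfl fun w _ => by rw [smul_smul]
    simp only [step1]
    have reord : ∑ u, ∑ v, ∑ w, ((hr u : ℂ) * x u * ((hr v : ℂ) * y v) * ((s u w v : ℝ) : ℂ)) • t w
        = ∑ w, ∑ u, ∑ v, ((hr u : ℂ) * x u * ((hr v : ℂ) * y v) * ((s u w v : ℝ) : ℂ)) • t w :=
      calc ∑ u, ∑ v, ∑ w, ((hr u : ℂ) * x u * ((hr v : ℂ) * y v) * ((s u w v : ℝ) : ℂ)) • t w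
          = ∑ u, ∑ w, ∑ v, ((hr u : ℂ) * x u * ((hr v : ℂ) * y v) * ((s u w v : ℝ) : ℂ)) • t w :=
            Finset.sum_congr rfl fun u _ => Finset.sum_comm
        _ = ∑ w, ∑ u, ∑ v, ((hr u : ℂ) * x u * ((hr v : ℂ) * y v) * ((s u w v : ℝ) : ℂ)) • t w :=
            Finset.sum_comm
    rw [reord]
    refine Finset.sum_congr rfl fun w _ => ?_
    simp only [← Finset.sum_smul]
    congr 1
    rw [conv_simp, Finset.mul_sum]
    refine Finset.sum_congr rfl fun u _ => ?_
    rw [Finset.mul_sum]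
    refine Finset.sum_congr rfl fun v _ => ?_
    rw [tapp]
    have h := hrneC w
    push_cast
    field_simp
  -- injectivity
  have Mh_v0 : ∀ x w, Mh s hl hr x w v0 = (hr v0 : ℂ) * x w := by
    intro x w
    rw [Mh_eq]
    simp only [Matrix.sum_apply, Matrix.smul_apply, smul_eq_mul, tapp]
    rw [Finset.sum_eq_single w]
    · rw [sdelta, if_pos rfl]
      have h := hrneC w
      push_cast
      field_simp
    · intro v _ hvw
      rw [sdelta, if_neg (fun h => hvw h.symm)]
      push_cast
      ring
    · intro h
      exact absurd (Finset.mem_univ w) h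
  have Mh_inj : Function.Injective (Mh s hl hr) := by
    intro x y h
    funext w
    have h1 := Mh_v0 x w
    rw [h] at h1
    have h2 := Mh_v0 y w
    exact mul_left_cancel₀ (hrneC v0) (h1.symm.trans h2)
  -- commutativity of products of Mh's
  have Mh_comm : ∀ x y, Mh s hl hr x * Mh s hl hr y = Mh s hl hr y * Mh s hl hr x := by
    intro x y
    rw [Mh_eq x, Mh_eq y, Finset.sum_mul_sum, Finset.sum_mul_sum, Finset.sum_comm]
    refine Finset.sum_congr rfl fun u _ => Finset.sum_congr rfl fun v _ => ?_
    rw [smul_mul_assoc, mul_smul_comm, smul_smul, smul_mul_assoc, mul_smul_comm, smul_smul,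
      tcomm u v]
    congr 1
    ring
  refine ⟨Mh_conv, Mh_inj, ?_, ?_, ?_⟩
  · intro x y
    apply Mh_inj
    rw [Mh_conv, Mh_conv, Mh_comm]
  · intro x y z
    apply Mh_inj
    rw [Mh_conv, Mh_conv, Mh_conv, Mh_conv, mul_assoc]
  · intro x y hx hy hx1 hy1
    -- real representation of the convolution
    have hxr : ∀ u, x u = ((x u).re : ℝ) := fun u => by
      rw [← Complex.re_add_im (x u), (hx u).1]
      simp
    have hyr : ∀ u, y u = ((y u).re : ℝ) := fun u => by
      rw [← Complex.re_add_im (y u), (hy u).1]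
      simp
    have hconv_real : ∀ w, conv s hr x y w
        = ((∑ u, ∑ v, hr u * (x u).re * (s u w v * hr v / hr w * (y v).re) : ℝ) : ℂ) := by
      intro w
      rw [conv_simp]
      push_cast
      refine Finset.sum_congr rfl fun u _ => Finset.sum_congr rfl fun v _ => ?_
      rw [tapp, ← hxr u, ← hyr v]
      push_cast
      ring
    constructor
    · intro w
      rw [hconv_real w]
      constructor
      · exact Complex.ofReal_im _
      · rw [Complex.ofReal_re]
        refine Finset.sum_nonneg fun u _ => Finset.sum_nonneg fun v _ => ?_
        have h1 : 0 ≤ hr u * (x u).re :=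
          mul_nonneg (hrpos u).le (hx u).2
        have h2 : 0 ≤ s u w v * hr v / hr w * (y v).re :=
          mul_nonneg (div_nonneg (mul_nonneg (hsnn u w v) (hrpos v).le) (hrpos w).le) (hy v).2
        exact mul_nonneg h1 h2
    · -- normalization
      have hlsum : ∀ u v, ∑ w, ((hl w * hr w : ℝ) : ℂ) * t u w v
          = ((hl u * hl v * hr v : ℝ) : ℂ) := by
        intro u v
        have h1 : ∑ w, s u w v * hl w = hl u * hl v := by
          have h := congrFun (hPFl u) v
          simpa [Matrix.mulVec, dotProduct, Matrix.transpose_apply, Pi.smul_apply,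
            smul_eq_mul, mul_comm] using h
        have hre : ∑ w, (hl w * hr w) * (s u w v * hr v / hr w) = hl u * hl v * hr v := by
          calc ∑ w, (hl w * hr w) * (s u w v * hr v / hr w)
              = ∑ w, (s u w v * hl w) * hr v :=
                Finset.sum_congr rfl fun w _ => by
                  field_simp [hrne w]
            _ = (∑ w, s u w v * hl w) * hr v := (Finset.sum_mul _ _ _).symm
            _ = hl u * hl v * hr v := by rw [h1]
        simp only [tapp]
        exact_mod_cast hre
      calc ∑ w, ((hl w * hr w : ℝ) : ℂ) * conv s hr x y w
          = ∑ w, ∑ u, ∑ v, ((hl w * hr w : ℝ) : ℂ)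
              * ((hr u : ℂ) * x u * (t u w v * y v)) := by
            refine Finset.sum_congr rfl fun w _ => ?_
            rw [conv_simp, Finset.mul_sum]
            exact Finset.sum_congr rfl fun u _ => by rw [Finset.mul_sum]
        _ = ∑ u, ∑ w, ∑ v, ((hl w * hr w : ℝ) : ℂ)
              * ((hr u : ℂ) * x u * (t u w v * y v)) := Finset.sum_comm
        _ = ∑ u, ∑ v, ∑ w, ((hl w * hr w : ℝ) : ℂ)
              * ((hr u : ℂ) * x u * (t u w v * y v)) :=
            Finset.sum_congr rfl fun u _ => Finset.sum_comm
        _ = ∑ u, ∑ v, ((hr u : ℂ) * x u * y v)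
              * ∑ w, ((hl w * hr w : ℝ) : ℂ) * t u w v := by
            refine Finset.sum_congr rfl fun u _ => Finset.sum_congr rfl fun v _ => ?_
            rw [Finset.mul_sum]
            exact Finset.sum_congr rfl fun w _ => by ring
        _ = ∑ u, ∑ v, ((hr u : ℂ) * x u * y v) * ((hl u * hl v * hr v : ℝ) : ℂ) := by
            refine Finset.sum_congr rfl fun u _ => Finset.sum_congr rfl fun v _ => ?_
            rw [hlsum]
        _ = (∑ u, ((hl u * hr u : ℝ) : ℂ) * x u) * (∑ v, ((hl v * hr v : ℝ) : ℂ) * y v) := by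
            rw [Finset.sum_mul_sum]
            refine Finset.sum_congr rfl fun u _ => Finset.sum_congr rfl fun v _ => ?_
            push_cast
            ring
        _ = 1 := by rw [hx1, hy1, one_mul]

end Paper
end
end

section
/- For all x, y: V → ℂ and every index i ∈ V: Φ[x*y](i) = Φ[x](i)·Φ[y](i), i.e. the discrete Fourier transform diagonalizes the convolution product. Moreover Φ: ℂ^V → ℂ^V is a linear bijection with Φ[ũ^{(i)}](j) = δ_{ij} for all i, j, so Φ^{-1} maps the i-th standard basis vector to ũ^{(i)}. -/
/-!
In matrix form `Φ = F *ᵥ ·`, and biorthogonality says `F * U = 1`, where `U` has the `ũ^{(i)}` as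
columns. In finite dimension this forces `U * F = 1`, so `Φ` is invertible, and the eigenvector
relations `s_v^h U = U diag(θ_v)` give `F s_v^h = diag(θ_v) F`: the transform turns each `s_v^h` into
multiplication by `θ_v`. As `Φ[x](i) = Σ_v h^r(v) θ_v(i) x(v)`, it sends
`x * y = Σ_v h^r(v) x(v) s_v^h y` to `Φ[x] Φ[y]`.
-/

noncomputable section

open Finset Matrix

namespace Paper

variable {V : Type*}

/-- The Hermitian product `⟨x,y⟩_h = Σ_v μ^h(v)·conj(x(v))·y(v)` with `μ^h = h^l·h^r`. -/
def innerH [Fintype V] (hl hr : V → ℝ) (x y : V → ℂ) : ℂ :=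
  ∑ v, ((hl v * hr v : ℝ) : ℂ) * (starRingEnd ℂ) (x v) * y v

/-- The discrete Fourier transform `Φ[x](i) = ⟨w̃^{(i)}, x⟩_h`. -/
def Phi [Fintype V] (hl hr : V → ℝ) (wt : V → V → ℂ) (x : V → ℂ) : V → ℂ :=
  fun i => innerH hl hr (wt i) x

section MatrixLemmas

variable {n R : Type*} [Fintype n] [DecidableEq n] [CommRing R]

theorem mul_eq_mul_diagonal_of_mulVec_eq_smul {S : Matrix n n R} {u : n → n → R} {d : n → R}
    (h : ∀ i, S *ᵥ u i = d i • u i) : S * (Matrix.of u)ᵀ = (Matrix.of u)ᵀ * diagonal d := by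
  ext w i
  rw [mul_diagonal, mul_apply]
  simpa [mulVec, dotProduct, mul_comm] using congrFun (h i) w

theorem mul_eq_diagonal_mul_of_mul_eq_one {F U S : Matrix n n R} {d : n → R}
    (hFU : F * U = 1) (hSU : S * U = U * diagonal d) : F * S = diagonal d * F := by
  have hUF : U * F = 1 := mul_eq_one_comm.mp hFU
  calc F * S = F * S * (U * F) := by rw [hUF, mul_one]
    _ = F * (S * U) * F := by simp only [Matrix.mul_assoc]
    _ = diagonal d * F := by rw [hSU, ← Matrix.mul_assoc, hFU, one_mul]

end MatrixLemmas

section Fourier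

variable [Fintype V] (hl hr : V → ℝ) (wt : V → V → ℂ)

def fourierMatrix : Matrix V V ℂ :=
  Matrix.of fun i v => ((hl v * hr v : ℝ) : ℂ) * (starRingEnd ℂ) (wt i v)

theorem Phi_eq_mulVec : Phi hl hr wt = (fourierMatrix hl hr wt).mulVec := by
  ext x i
  simp only [Phi, innerH, fourierMatrix, mulVec, dotProduct, of_apply, mul_assoc]

theorem Phi_conv_apply (s : V → Matrix V V ℝ) (x y : V → ℂ) (i : V) :
    Phi hl hr wt (conv s hr x y) i = ∑ v, hr v * x v * Phi hl hr wt (svh (s v) hr *ᵥ y) i := by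
  have hconv : conv s hr x y = ∑ v, (hr v * x v) • (svh (s v) hr *ᵥ y) := by
    ext w
    simp [conv]
  simp [Phi_eq_mulVec, hconv, mulVec_sum, mulVec_smul, Finset.sum_apply]

theorem Phi_apply_eq_sum {θ : V → V → ℂ} (hl0 : ∀ v, hl v ≠ 0)
    (hwt : ∀ i v, wt i v = (starRingEnd ℂ) (θ v i) / (hl v : ℂ)) (x : V → ℂ) (i : V) :
    Phi hl hr wt x i = ∑ v, hr v * θ v i * x v := by
  refine Finset.sum_congr rfl fun v _ => ?_
  have : (hl v : ℂ) ≠ 0 := Complex.ofReal_ne_zero.mpr (hl0 v)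
  rw [hwt, map_div₀, Complex.conj_conj, Complex.conj_ofReal]
  push_cast
  field_simp

variable [DecidableEq V] {ut : V → V → ℂ}
  (hdual : ∀ i j, innerH hl hr (wt i) (ut j) = if i = j then 1 else 0)
include hdual

theorem fourierMatrix_mul_eq_one : fourierMatrix hl hr wt * (Matrix.of ut)ᵀ = 1 := by
  ext i j
  rw [one_apply, ← hdual]
  simp only [innerH, fourierMatrix, mul_apply, of_apply, transpose_apply, mul_assoc]

theorem Phi_bijective : Function.Bijective (Phi hl hr wt) := by
  have hUF := mul_eq_one_comm.mp (fourierMatrix_mul_eq_one hl hr wt hdual)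
  rw [Phi_eq_mulVec, Function.bijective_iff_has_inverse]
  refine ⟨((Matrix.of ut)ᵀ).mulVec, fun x => ?_, fun x => ?_⟩
  · rw [mulVec_mulVec, hUF, one_mulVec]
  · rw [mulVec_mulVec, fourierMatrix_mul_eq_one hl hr wt hdual, one_mulVec]

theorem Phi_mulVec_of_mulVec_eq_smul {S : Matrix V V ℂ} {d : V → ℂ}
    (heig : ∀ i, S *ᵥ ut i = d i • ut i) (y : V → ℂ) (i : V) :
    Phi hl hr wt (S *ᵥ y) i = d i * Phi hl hr wt y i := by
  rw [Phi_eq_mulVec, mulVec_mulVec, mul_eq_diagonal_mul_of_mul_eq_one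
    (fourierMatrix_mul_eq_one hl hr wt hdual) (mul_eq_mul_diagonal_of_mulVec_eq_smul heig),
    ← mulVec_mulVec, mulVec_diagonal]

end Fourier

theorem stmt5_general [Fintype V] [DecidableEq V]
    (hl hr : V → ℝ) (hlpos : ∀ v, 0 < hl v)
    (s : V → Matrix V V ℝ)
    (ut wt : V → V → ℂ)
    (θ : V → V → ℂ)
    (heig : ∀ v i, (svh (s v) hr).mulVec (ut i) = θ v i • ut i)
    (hwt : ∀ i v, wt i v = (starRingEnd ℂ) (θ v i) / (hl v : ℂ))
    (hdual : ∀ i j, innerH hl hr (wt i) (ut j) = if i = j then 1 else 0) :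
    (∀ x y i, Phi hl hr wt (conv s hr x y) i = Phi hl hr wt x i * Phi hl hr wt y i) ∧
    Function.Bijective (Phi hl hr wt) ∧
    (∀ i j, Phi hl hr wt (ut i) j = if i = j then 1 else 0) := by
  refine ⟨fun x y i => ?_, Phi_bijective hl hr wt hdual, fun i j => ?_⟩
  · rw [Phi_conv_apply, Phi_apply_eq_sum hl hr wt (fun v => (hlpos v).ne') hwt, Finset.sum_mul]
    refine Finset.sum_congr rfl fun v _ => ?_
    rw [Phi_mulVec_of_mulVec_eq_smul hl hr wt hdual (heig v)]
    ring
  · rw [Phi, hdual]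
    simp only [eq_comm]

/-- the Fourier transform diagonalizes the convolution product,
`Φ[x*y](i) = Φ[x](i)Φ[y](i)`, and `Φ` is a (linear) bijection with `Φ[ũ^{(i)}](j) = δ_{ij}`. -/
theorem stmt5 [Fintype V] [DecidableEq V] [Nonempty V] (v0 : V)
    (hl hr : V → ℝ) (hlpos : ∀ v, 0 < hl v) (hrpos : ∀ v, 0 < hr v)
    (s : V → Matrix V V ℝ)
    (ut wt : V → V → ℂ)
    (hbasis : LinearIndependent ℂ ut)
    (θ : V → V → ℂ)
    (heig : ∀ v i, (svh (s v) hr).mulVec (ut i) = θ v i • ut i)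
    (hwt : ∀ i v, wt i v = (starRingEnd ℂ) (θ v i) / (hl v : ℂ))
    (hdual : ∀ i j, innerH hl hr (wt i) (ut j) = if i = j then 1 else 0) :
    (∀ x y i, Phi hl hr wt (conv s hr x y) i = Phi hl hr wt x i * Phi hl hr wt y i) ∧
    Function.Bijective (Phi hl hr wt) ∧
    (∀ i j, Phi hl hr wt (ut i) j = if i = j then 1 else 0) :=
  stmt5_general hl hr hlpos s ut wt θ heig hwt hdual

end Paper
end
end

section
/- (Verlinde formula.) For every p ≥ 1 and every v_1, …, v_p ∈ V: (s_{v_1} s_{v_2} ⋯ s_{v_p}) e_{v_0} = Σ_{i∈V} (∏_{j=1}^p θ_{v_j}(i)) · u^{(i)}. In particular, if c: V → ℂ is such that s_{v_1} ⋯ s_{v_p} = Σ_{v∈V} c(v)·s_v and the matrices (s_v) satisfy s_v e_{v_0} = e_v, then c(v) = Σ_{i∈V} (∏_{j=1}^p θ_{v_j}(i)) · u^{(i)}(v) for every v ∈ V. -/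
/-!
Since a one-sided inverse of a square matrix is two-sided, the duality `⟨w^{(i)}, u^{(j)}⟩ = δ_{ij}`
gives the completeness relation `Σ_i u^{(i)} conj (w^{(i)})ᵀ = 1`, whose `v₀`-th column is
`e_{v₀} = Σ_i u^{(i)}` by the normalization `w^{(i)}(v₀) = 1`. A product of the `s_v` scales each
`u^{(i)}` by the product of the eigenvalues, which gives the vector formula. For the coefficients,
`s_v e_{v₀} = e_v` makes `M ↦ M e_{v₀}` send `Σ_v c(v) s_v` to `c`.
-/

open Matrix

namespace Paper

theorem sum_mul_eq_ite_of_sum_mul_eq_ite {n R : Type*} [Fintype n] [DecidableEq n] [CommRing R]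
    {a b : n → n → R} (hab : ∀ i j, ∑ v, a i v * b j v = if i = j then 1 else 0) (v v' : n) :
    ∑ i, b i v * a i v' = if v = v' then 1 else 0 := by
  have hAB : Matrix.of a * (Matrix.of b)ᵀ = 1 := by
    ext i j
    simp [Matrix.mul_apply, hab, Matrix.one_apply]
  have hBA : ((Matrix.of b)ᵀ * Matrix.of a) v v' = (1 : Matrix n n R) v v' := by
    rw [mul_eq_one_comm.mp hAB]
  simpa [Matrix.mul_apply, Matrix.one_apply] using hBA

theorem sum_eq_single_of_dual {V : Type*} [Fintype V] [DecidableEq V] (v0 : V)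
    {u w : V → V → ℂ}
    (hdual : ∀ i j, ∑ v, starRingEnd ℂ (w i v) * u j v = if i = j then 1 else 0)
    (hnorm : ∀ i, w i v0 = 1) :
    ∑ i, u i = Pi.single v0 1 := by
  ext v
  have h := sum_mul_eq_ite_of_sum_mul_eq_ite hdual v v0
  simpa [hnorm, Pi.single_apply] using h

theorem ofFn_prod_mulVec_of_forall_mulVec_eq_smul {V ι R : Type*} [Fintype V] [DecidableEq V]
    [CommRing R] {s : ι → Matrix V V R} {x : V → R} {θ : ι → R}
    (heig : ∀ v, s v *ᵥ x = θ v • x) :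
    ∀ {p : ℕ} (vs : Fin p → ι), (List.ofFn fun j => s (vs j)).prod *ᵥ x = (∏ j, θ (vs j)) • x
  | 0, _ => by simp
  | p + 1, vs => by
    rw [List.ofFn_succ, List.prod_cons, ← Matrix.mulVec_mulVec,
      ofFn_prod_mulVec_of_forall_mulVec_eq_smul heig, Matrix.mulVec_smul, heig,
      Fin.prod_univ_succ, smul_smul, mul_comm]

theorem sum_smul_mulVec_single {V R : Type*} [Fintype V] [DecidableEq V] [CommRing R] (v0 : V)
    {s : V → Matrix V V R} (hse : ∀ v, s v *ᵥ Pi.single v0 1 = Pi.single v 1) (c : V → R) :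
    (∑ v, c v • s v) *ᵥ Pi.single v0 1 = c := by
  simp only [Matrix.sum_mulVec, Matrix.smul_mulVec, hse]
  ext v
  simp [Pi.single_apply]

theorem stmt6_general {V : Type*} [Fintype V] [DecidableEq V] (v0 : V)
    (s : V → Matrix V V ℂ)
    (hse : ∀ v, (s v).mulVec (Pi.single v0 1) = Pi.single v 1)
    (u w : V → V → ℂ)
    (hdual : ∀ i j, (∑ v, (starRingEnd ℂ) (w i v) * u j v) = if i = j then 1 else 0)
    (hnorm : ∀ i, w i v0 = 1)
    (θ : V → V → ℂ)
    (heig : ∀ v i, (s v).mulVec (u i) = θ v i • u i) :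
    ∀ (p : ℕ), 1 ≤ p → ∀ vs : Fin p → V,
      ((List.ofFn fun j => s (vs j)).prod.mulVec (Pi.single v0 1) =
        ∑ i, (∏ j, θ (vs j) i) • u i) ∧
      (∀ c : V → ℂ, (List.ofFn fun j => s (vs j)).prod = ∑ v, c v • s v →
        ∀ v, c v = ∑ i, (∏ j, θ (vs j) i) * u i v) := by
  intro p _ vs
  have hvec : (List.ofFn fun j => s (vs j)).prod *ᵥ Pi.single v0 1 =
      ∑ i, (∏ j, θ (vs j) i) • u i := by
    rw [← sum_eq_single_of_dual v0 hdual hnorm, Matrix.mulVec_sum]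
    exact Finset.sum_congr rfl fun i _ =>
      ofFn_prod_mulVec_of_forall_mulVec_eq_smul (fun v => heig v i) vs
  refine ⟨hvec, fun c hc v => ?_⟩
  rw [hc, sum_smul_mulVec_single v0 hse] at hvec
  simpa using congrFun hvec v

/-- Verlinde formula: for vertices `v_1,…,v_p`,
`(s_{v_1}⋯s_{v_p}) e_{v_0} = Σ_i (∏_j θ_{v_j}(i)) u^{(i)}`, and consequently the structure
coefficients `c` of `s_{v_1}⋯s_{v_p} = Σ_v c(v) s_v` are `c(v) = Σ_i (∏_j θ_{v_j}(i)) u^{(i)}(v)`. -/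
theorem stmt6 {V : Type*} [Fintype V] [DecidableEq V] [Nonempty V] (v0 : V)
    (s : V → Matrix V V ℂ)
    (hse : ∀ v, (s v).mulVec (Pi.single v0 1) = Pi.single v 1)
    (u w : V → V → ℂ)
    (hbasis : LinearIndependent ℂ u)
    (hdual : ∀ i j, (∑ v, (starRingEnd ℂ) (w i v) * u j v) = if i = j then 1 else 0)
    (hnorm : ∀ i, w i v0 = 1)
    (θ : V → V → ℂ)
    (heig : ∀ v i, (s v).mulVec (u i) = θ v i • u i) :
    ∀ (p : ℕ), 1 ≤ p → ∀ vs : Fin p → V,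
      ((List.ofFn fun j => s (vs j)).prod.mulVec (Pi.single v0 1) =
        ∑ i, (∏ j, θ (vs j) i) • u i) ∧
      (∀ c : V → ℂ, (List.ofFn fun j => s (vs j)).prod = ∑ v, c v • s v →
        ∀ v, c v = ∑ i, (∏ j, θ (vs j) i) * u i v) :=
  stmt6_general v0 s hse u w hdual hnorm θ heig

end Paper
end

section
/- For every I ∈ B_{k,n}: V(ξ_n(I)) = exp(i(k−1)π(⟨I⟩−⟨I_0⟩)/n) · V(ξ_n(I_0)) · S_I(ξ_n(I_0)). -/
noncomputable section

open Finset

namespace Paper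

def aJ (k : ℕ) (J : Fin k → ℤ) (u : Fin k → ℝ) : ℂ :=
  Matrix.det (Matrix.of fun l m : Fin k => Complex.exp (Complex.I * (u l : ℂ) * (J m : ℂ)))

def I0 (k : ℕ) : Fin k → ℤ := fun i => (k : ℤ) - 1 - (i : ℤ)

def Vdm (k : ℕ) (u : Fin k → ℝ) : ℂ := aJ k (I0 k) u

def SJ (k : ℕ) (J : Fin k → ℤ) (u : Fin k → ℝ) : ℂ := aJ k J u / Vdm k u

def xi (k n : ℕ) (I : Fin k → ℤ) : Fin k → ℝ :=
  fun j => (2 * Real.pi / (n : ℝ)) * ((I j : ℝ) - ((k : ℝ) - 1) / 2)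

def sz (k : ℕ) (I : Fin k → ℤ) : ℤ := ∑ i, I i

lemma Vdm_ne_zero (k n : ℕ) (hk : 1 ≤ k) (hkn : k ≤ n) :
    Vdm k (xi k n (I0 k)) ≠ 0 := by
  have hn : 0 < n := lt_of_lt_of_le hk hkn
  set u : Fin k → ℝ := xi k n (I0 k) with hu
  set x : Fin k → ℂ := fun l => Complex.exp (Complex.I * (u l : ℂ)) with hx
  have hM : (Matrix.of fun l m : Fin k =>
      Complex.exp (Complex.I * (u l : ℂ) * ((I0 k m : ℤ) : ℂ)))
      = (Matrix.vandermonde x).submatrix id Fin.revPerm := by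
    ext l m
    have hm : ((I0 k m : ℤ) : ℂ) = ((Fin.rev m : ℕ) : ℂ) := by
      have h1 : ((Fin.rev m : ℕ) : ℤ) = (k:ℤ) - 1 - (m:ℤ) := by
        rw [Fin.val_rev]
        have hmk : (m : ℕ) < k := m.isLt
        omega
      have h2 : ((I0 k m : ℤ) : ℂ) = (((Fin.rev m : ℕ) : ℤ) : ℂ) := by
        rw [h1]; simp [I0]
      rw [h2]; push_cast; ring
    simp only [Matrix.of_apply, Matrix.submatrix_apply, Matrix.vandermonde_apply, id_eq,
      Fin.revPerm_apply]
    rw [hm, mul_comm, Complex.exp_nat_mul]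
  have hinj : Function.Injective x := by
    intro l m hlm
    have := Complex.exp_eq_exp_iff_exists_int.mp hlm
    obtain ⟨t, ht⟩ := this
    have hre : (u l : ℂ) * Complex.I = (u m : ℂ) * Complex.I + (t : ℂ) * (2 * Real.pi * Complex.I) := by
      rw [mul_comm] at ht
      rw [ht]; push_cast; ring
    have him : u l = u m + t * (2 * Real.pi) := by
      have := congrArg Complex.im hre
      simpa using this
    have hul : u l - u m = (2 * Real.pi / n) * ((m : ℕ) - (l : ℕ)) := by
      simp only [hu, xi, I0]
      push_cast
      ring
    have hpi : (0:ℝ) < Real.pi := Real.pi_pos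
    have hne : (n:ℝ) ≠ 0 := by positivity
    have key : ((m : ℕ) : ℝ) - ((l : ℕ) : ℝ) = (n : ℝ) * t := by
      have h2 : (2 * Real.pi / n) * (((m : ℕ):ℝ) - ((l : ℕ):ℝ)) = t * (2 * Real.pi) := by
        rw [← hul]; linarith [him]
      field_simp at h2
      nlinarith [h2, hpi]
    have keyz : ((m : ℕ) : ℤ) - ((l : ℕ) : ℤ) = (n : ℤ) * t := by exact_mod_cast key
    have hlt : ((m : ℕ) : ℤ) < k := by exact_mod_cast m.isLt
    have hlt' : ((l : ℕ) : ℤ) < k := by exact_mod_cast l.isLt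
    have ht0 : t = 0 := by
      rcases lt_trichotomy t 0 with h | h | h
      · nlinarith [keyz, (by exact_mod_cast hkn : (k:ℤ) ≤ n)]
      · exact h
      · nlinarith [keyz, (by exact_mod_cast hkn : (k:ℤ) ≤ n)]
    subst ht0
    exact Fin.ext (by omega)
  have hvne : (Matrix.vandermonde x).det ≠ 0 :=
    Matrix.det_vandermonde_ne_zero_iff.mpr hinj
  unfold Vdm aJ
  rw [hM, Matrix.det_permute']
  simp only [ne_eq, mul_eq_zero, not_or]
  constructor
  · rcases Int.units_eq_one_or (Equiv.Perm.sign (Fin.revPerm : Equiv.Perm (Fin k))) with h | h <;>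
      simp [h]
  · exact hvne

open Matrix in
lemma main_det (k n : ℕ) (I : Fin k → ℤ) :
    Vdm k (xi k n I) =
      Complex.exp (Complex.I * ((k : ℂ) - 1) * (Real.pi : ℂ) *
          ((sz k I : ℂ) - (sz k (I0 k) : ℂ)) / (n : ℂ)) * aJ k I (xi k n (I0 k)) := by
  set r : Fin k → ℂ := fun l => Complex.exp (Complex.I * (Real.pi : ℂ) * ((k:ℂ)-1) * (I l : ℂ) / n)
  set c : Fin k → ℂ := fun m => Complex.exp (-(Complex.I * (Real.pi : ℂ) * ((k:ℂ)-1) * ((I0 k m : ℤ):ℂ)) / n)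
  set B : Matrix (Fin k) (Fin k) ℂ :=
    (Matrix.of fun a b : Fin k => Complex.exp (Complex.I * ((xi k n (I0 k)) a : ℂ) * (I b : ℂ)))ᵀ
  have hentry : (Matrix.of fun l m : Fin k =>
      Complex.exp (Complex.I * ((xi k n I) l : ℂ) * ((I0 k m : ℤ) : ℂ)))
      = Matrix.of fun l m : Fin k => r l * (Matrix.of fun l m : Fin k => c m * B l m) l m := by
    ext l m
    simp only [Matrix.of_apply, Matrix.transpose_apply, B, r, c]
    rw [← Complex.exp_add, ← Complex.exp_add]
    congr 1
    simp only [xi, I0]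
    push_cast
    ring
  have hdet : Vdm k (xi k n I) = (∏ l, r l) * ((∏ m, c m) * aJ k I (xi k n (I0 k))) := by
    unfold Vdm aJ
    rw [hentry, Matrix.det_mul_column, Matrix.det_mul_row, Matrix.det_transpose]
  rw [hdet]
  rw [← Complex.exp_sum, ← Complex.exp_sum, ← mul_assoc, ← Complex.exp_add]
  congr 1
  rw [← Finset.sum_add_distrib]
  have hszI : ((sz k I : ℤ) : ℂ) = ∑ i, (I i : ℂ) := by push_cast [sz]; ring
  have hszI0 : ((sz k (I0 k) : ℤ) : ℂ) = ∑ i, ((I0 k i : ℤ) : ℂ) := by push_cast [sz]; ring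
  rw [hszI, hszI0, ← Finset.sum_sub_distrib, Finset.mul_sum, Finset.sum_div]
  congr 1
  apply Finset.sum_congr rfl
  intro i _
  ring

/-- `V(ξ_n(I)) = e^{i(k-1)π(⟨I⟩-⟨I_0⟩)/n} · V(ξ_n(I_0)) · S_I(ξ_n(I_0))`
for every `I ∈ B_{k,n}`. -/
theorem stmt8 (k n : ℕ) (hk : 1 ≤ k) (hkn : k ≤ n) (I : Fin k → ℤ)
    (hIdec : ∀ i j : Fin k, i < j → I j < I i)
    (hIbd : ∀ i, 0 ≤ I i ∧ I i < (n : ℤ)) :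
    Vdm k (xi k n I) =
      Complex.exp (Complex.I * ((k : ℂ) - 1) * (Real.pi : ℂ) *
          ((sz k I : ℂ) - (sz k (I0 k) : ℂ)) / (n : ℂ)) *
        Vdm k (xi k n (I0 k)) * SJ k I (xi k n (I0 k)) := by
  have hne := Vdm_ne_zero k n hk hkn
  rw [SJ, mul_assoc, mul_div_assoc', mul_div_cancel_left₀ _ hne]
  exact main_det k n I

end Paper
end
end

section
/- For every I ∈ B_{k,n}, the number S_I(ξ_n(I_0)) is a strictly positive real number, given explicitly by S_I(ξ_n(I_0)) = ∏_{1≤l<m≤k} sin(π(I_l − I_m)/n) / sin(π(m − l)/n); equivalently, |V(ξ_n(I_0))| · S_I(ξ_n(I_0)) = |V(ξ_n(I))|. (This identifies the Perron–Frobenius eigenvector data of the graph B_{k,n}: h^l(I) = |V(ξ_n(I))|/|V(ξ_n(I_0))| and the invariant probability measure μ^h(I) = |V(ξ_n(I))|²/n^k.) -/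
/-!
At `u = ξ_n(I₀)` the entry `exp (i u_l J_m)` is a unimodular column factor times `w_m ^ l` with
`w_m = exp (-2πi J_m / n)`, so `a_J(ξ_n(I₀))` is a rescaled Vandermonde determinant. Writing
`w_j - w_i = exp (-i(φ_i + φ_j)/2) · 2i sin ((φ_i - φ_j)/2)`, the phases collected over all pairs
exactly cancel the column factors, leaving `a_J(ξ_n(I₀)) = ∏_{l<m} 2i sin (π(J_l - J_m)/n)`.
Transposing the same computation gives `|V(ξ_n(J))| = ∏_{l<m} 2|sin (π(J_l - J_m)/n)|`, and for
`J ∈ B_{k,n}` every such sine is positive since `0 < J_l - J_m < n`.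
-/

noncomputable section

open Finset

namespace Paper

open Complex

theorem prod_filter_lt_eq_prod_prod_Ioi {k : ℕ} {M : Type*} [CommMonoid M]
    (f : Fin k × Fin k → M) :
    ∏ p ∈ univ.filter (fun p : Fin k × Fin k => p.1 < p.2), f p = ∏ i, ∏ j ∈ Ioi i, f (i, j) := by
  rw [prod_filter, Fintype.prod_prod_type]
  refine prod_congr rfl fun i _ => ?_
  rw [← prod_filter]
  exact prod_congr (by ext j; simp) fun _ _ => rfl

theorem prod_prod_Ioi_mul_mul_eq_prod_pow_mul {k : ℕ} {M : Type*} [CommMonoid M] (g : Fin k → M)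
    (f : Fin k → Fin k → M) :
    ∏ i, ∏ j ∈ Ioi i, g i * g j * f i j = (∏ i, g i ^ (k - 1)) * ∏ i, ∏ j ∈ Ioi i, f i j := by
  simp_rw [prod_mul_distrib (f := fun j => g _ * g j)]
  rw [prod_mul_distrib, prod_prod_Ioi_mul_eq_prod_prod_off_diag (fun _ j => g j)]
  simp [prod_const, card_compl]

theorem exp_neg_mul_I_sub_exp_neg_mul_I (a b : ℂ) :
    exp (-I * b) - exp (-I * a) =
      exp (-I * a / 2) * exp (-I * b / 2) * (2 * I * sin ((a - b) / 2)) := by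
  rw [sin, ← exp_add]
  have h₁ : exp (-I * a / 2 + -I * b / 2) * exp (-((a - b) / 2) * I) = exp (-I * a) := by
    rw [← exp_add]; ring_nf
  have h₂ : exp (-I * a / 2 + -I * b / 2) * exp ((a - b) / 2 * I) = exp (-I * b) := by
    rw [← exp_add]; ring_nf
  linear_combination -h₂ + h₁ + (exp (-I * a / 2 + -I * b / 2) * exp ((a - b) / 2 * I)
    - exp (-I * a / 2 + -I * b / 2) * exp (-((a - b) / 2) * I)) * I_sq

theorem det_exp_centered_eq_prod_sin {k : ℕ} (φ : Fin k → ℂ) :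
    (Matrix.of fun l m : Fin k => exp (I * ((((k : ℂ) - 1) / 2 - l) * φ m))).det =
      ∏ i, ∏ j ∈ Ioi i, 2 * I * sin ((φ i - φ j) / 2) := by
  have hentry : ∀ l m : Fin k, exp (I * ((((k : ℂ) - 1) / 2 - l) * φ m)) =
      (exp (-I * φ m / 2) ^ (k - 1))⁻¹ * exp (-I * φ m) ^ (l : ℕ) := by
    intro l m
    simp only [← exp_nat_mul, ← exp_neg, ← exp_add, Nat.cast_pred m.pos]
    ring_nf
  have hmat : (Matrix.of fun l m : Fin k =>
        (exp (-I * φ m / 2) ^ (k - 1))⁻¹ * exp (-I * φ m) ^ (l : ℕ)) =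
      Matrix.of fun l m => (exp (-I * φ m / 2) ^ (k - 1))⁻¹ *
        (Matrix.vandermonde fun m => exp (-I * φ m)).transpose l m := rfl
  have hne : ∏ m, exp (-I * φ m / 2) ^ (k - 1) ≠ 0 :=
    prod_ne_zero_iff.mpr fun m _ => pow_ne_zero _ (exp_ne_zero _)
  simp_rw [hentry]
  rw [hmat, Matrix.det_mul_row, Matrix.det_transpose, Matrix.det_vandermonde]
  simp only [exp_neg_mul_I_sub_exp_neg_mul_I]
  rw [prod_prod_Ioi_mul_mul_eq_prod_pow_mul (fun m => exp (-I * φ m / 2)), prod_inv_distrib,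
    ← mul_assoc, inv_mul_cancel₀ hne, one_mul]

theorem aJ_xi_I0 {k : ℕ} (n : ℕ) (J : Fin k → ℤ) :
    aJ k J (xi k n (I0 k)) = ∏ p ∈ univ.filter (fun p : Fin k × Fin k => p.1 < p.2),
      2 * I * (Real.sin (Real.pi * ((J p.1 : ℝ) - J p.2) / n) : ℂ) := by
  have hmat : (Matrix.of fun l m : Fin k => exp (I * (xi k n (I0 k) l : ℂ) * (J m : ℂ))) =
      Matrix.of fun l m : Fin k =>
        exp (I * ((((k : ℂ) - 1) / 2 - (l : ℕ)) * ((2 * Real.pi / n * J m : ℝ) : ℂ))) := by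
    ext l m
    simp only [Matrix.of_apply, xi, I0]
    push_cast
    ring_nf
  rw [aJ, hmat, det_exp_centered_eq_prod_sin, prod_filter_lt_eq_prod_prod_Ioi]
  refine prod_congr rfl fun i _ => prod_congr rfl fun j _ => ?_
  push_cast
  ring_nf

theorem norm_Vdm_xi {k : ℕ} (n : ℕ) (J : Fin k → ℤ) :
    ‖Vdm k (xi k n J)‖ = ∏ p ∈ univ.filter (fun p : Fin k × Fin k => p.1 < p.2),
      2 * |Real.sin (Real.pi * ((J p.1 : ℝ) - J p.2) / n)| := by
  set u := xi k n J
  have hmat : (Matrix.of fun l m : Fin k => exp (I * (u l : ℂ) * (I0 k m : ℂ))) =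
      Matrix.of fun l m => exp (I * (((k : ℂ) - 1) / 2 * u l)) *
        (Matrix.of fun l m : Fin k =>
          exp (I * ((((k : ℂ) - 1) / 2 - (l : ℕ)) * u m))).transpose l m := by
    ext l m
    simp only [Matrix.of_apply, Matrix.transpose_apply, I0, ← exp_add]
    push_cast
    ring_nf
  rw [Vdm, aJ, hmat, Matrix.det_mul_column, Matrix.det_transpose, det_exp_centered_eq_prod_sin,
    norm_mul, norm_prod, prod_filter_lt_eq_prod_prod_Ioi]
  have hunit : ∀ l, ‖exp (I * (((k : ℂ) - 1) / 2 * u l))‖ = 1 := fun l => by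
    rw [mul_comm]
    exact_mod_cast norm_exp_ofReal_mul_I (((k : ℝ) - 1) / 2 * u l)
  simp only [hunit, prod_const_one, one_mul, norm_prod]
  refine prod_congr rfl fun i _ => prod_congr rfl fun j _ => ?_
  have harg : ((u i : ℂ) - u j) / 2 = ((Real.pi * ((J i : ℝ) - J j) / n : ℝ) : ℂ) := by
    simp only [u, xi]
    push_cast
    ring
  rw [harg, ← ofReal_sin, norm_mul, norm_real, Real.norm_eq_abs]
  simp

theorem sin_pi_mul_sub_div_pos {n : ℕ} {a b : ℤ} (hba : b < a) (hb : 0 ≤ b) (ha : a < n) :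
    0 < Real.sin (Real.pi * ((a : ℝ) - b) / n) := by
  have hn : (0 : ℝ) < n := by exact_mod_cast hb.trans_lt (hba.trans ha)
  have hab : (0 : ℝ) < a - b := by exact_mod_cast sub_pos.2 hba
  have habn : (a : ℝ) - b < n := by exact_mod_cast (show a - b < n by omega)
  apply Real.sin_pos_of_pos_of_lt_pi (div_pos (mul_pos Real.pi_pos hab) hn)
  rw [div_lt_iff₀ hn]
  exact mul_lt_mul_of_pos_left habn Real.pi_pos

theorem stmt9_general (k n : ℕ) (hkn : k ≤ n) (I : Fin k → ℤ)
    (hIdec : ∀ i j : Fin k, i < j → I j < I i)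
    (hIbd : ∀ i, 0 ≤ I i ∧ I i < (n : ℤ)) :
    SJ k I (xi k n (I0 k)) =
      ((∏ p ∈ Finset.univ.filter (fun p : Fin k × Fin k => p.1 < p.2),
          Real.sin (Real.pi * ((I p.1 : ℝ) - (I p.2 : ℝ)) / (n : ℝ)) /
            Real.sin (Real.pi * (((p.2 : ℕ) : ℝ) - ((p.1 : ℕ) : ℝ)) / (n : ℝ)) : ℝ) : ℂ) ∧
    (0 < (∏ p ∈ Finset.univ.filter (fun p : Fin k × Fin k => p.1 < p.2),
          Real.sin (Real.pi * ((I p.1 : ℝ) - (I p.2 : ℝ)) / (n : ℝ)) /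
            Real.sin (Real.pi * (((p.2 : ℕ) : ℝ) - ((p.1 : ℕ) : ℝ)) / (n : ℝ)))) ∧
    (((‖Vdm k (xi k n (I0 k))‖ : ℝ) : ℂ) * SJ k I (xi k n (I0 k)) =
      ((‖Vdm k (xi k n I)‖ : ℝ) : ℂ)) := by
  have hI0 : ∀ p : Fin k × Fin k, ((I0 k p.1 : ℤ) : ℝ) - I0 k p.2 = ((p.2 : ℕ) : ℝ) - (p.1 : ℕ) :=
    fun p => by simp only [I0]; push_cast; ring
  have hposI : ∀ p ∈ univ.filter (fun p : Fin k × Fin k => p.1 < p.2),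
      0 < Real.sin (Real.pi * ((I p.1 : ℝ) - I p.2) / n) := fun p hp =>
    sin_pi_mul_sub_div_pos (hIdec _ _ (mem_filter.1 hp).2) (hIbd _).1 (hIbd _).2
  have hpos0 : ∀ p ∈ univ.filter (fun p : Fin k × Fin k => p.1 < p.2),
      0 < Real.sin (Real.pi * (((p.2 : ℕ) : ℝ) - (p.1 : ℕ)) / n) := fun p hp => by
    have hlt : (p.1 : ℕ) < p.2 := (mem_filter.1 hp).2
    have hp2 : (p.2 : ℕ) < k := p.2.isLt
    rw [← hI0]
    apply sin_pi_mul_sub_div_pos <;> simp only [I0] <;> omega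
  have hS : SJ k I (xi k n (I0 k)) = ((∏ p ∈ univ.filter (fun p : Fin k × Fin k => p.1 < p.2),
      Real.sin (Real.pi * ((I p.1 : ℝ) - I p.2) / n) /
        Real.sin (Real.pi * (((p.2 : ℕ) : ℝ) - (p.1 : ℕ)) / n) : ℝ) : ℂ) := by
    rw [SJ, Vdm, aJ_xi_I0, aJ_xi_I0, ← prod_div_distrib, ofReal_prod]
    refine prod_congr rfl fun p _ => ?_
    rw [hI0, mul_div_mul_left _ _ (mul_ne_zero two_ne_zero I_ne_zero), ofReal_div]
  refine ⟨hS, prod_pos fun p hp => div_pos (hposI p hp) (hpos0 p hp), ?_⟩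
  rw [hS, norm_Vdm_xi, norm_Vdm_xi, ← ofReal_mul, ← prod_mul_distrib]
  refine congrArg _ (prod_congr rfl fun p hp => ?_)
  rw [hI0, abs_of_pos (hposI p hp), abs_of_pos (hpos0 p hp)]
  field_simp [(hpos0 p hp).ne']

/-- `S_I(ξ_n(I_0))` is a strictly positive real number, given by the explicit
product of ratios of sines, and `|V(ξ_n(I_0))| · S_I(ξ_n(I_0)) = |V(ξ_n(I))|`. -/
theorem stmt9 (k n : ℕ) (hk : 1 ≤ k) (hkn : k ≤ n) (I : Fin k → ℤ)
    (hIdec : ∀ i j : Fin k, i < j → I j < I i)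
    (hIbd : ∀ i, 0 ≤ I i ∧ I i < (n : ℤ)) :
    SJ k I (xi k n (I0 k)) =
      ((∏ p ∈ Finset.univ.filter (fun p : Fin k × Fin k => p.1 < p.2),
          Real.sin (Real.pi * ((I p.1 : ℝ) - (I p.2 : ℝ)) / (n : ℝ)) /
            Real.sin (Real.pi * (((p.2 : ℕ) : ℝ) - ((p.1 : ℕ) : ℝ)) / (n : ℝ)) : ℝ) : ℂ) ∧
    (0 < (∏ p ∈ Finset.univ.filter (fun p : Fin k × Fin k => p.1 < p.2),
          Real.sin (Real.pi * ((I p.1 : ℝ) - (I p.2 : ℝ)) / (n : ℝ)) /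
            Real.sin (Real.pi * (((p.2 : ℕ) : ℝ) - ((p.1 : ℕ) : ℝ)) / (n : ℝ)))) ∧
    (((‖Vdm k (xi k n (I0 k))‖ : ℝ) : ℂ) * SJ k I (xi k n (I0 k)) =
      ((‖Vdm k (xi k n I)‖ : ℝ) : ℂ)) :=
  stmt9_general k n hkn I hIdec hIbd

end Paper
end
end

section
/- For all I, I' ∈ B_{k,n}: Σ_{J ∈ B_{k,n}} S_J(ξ_n(I)) · conj( S_J(ξ_n(I')) ) equals n^k / |V(ξ_n(I))|² if I = I', and equals 0 if I ≠ I'. In particular, the vectors w^{(I)} = ( conj(S_J(ξ_n(I))) )_{J∈B_{k,n}} for I ∈ B_{k,n} form an orthogonal basis of ℂ^{B_{k,n}} with ‖w^{(I)}‖² = n^k/|V(ξ_n(I))|². -/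
/-!
Let `ζ = e^{2πi/n}` and let `F = (ζ^{ab})_{a,b<n}` be the Fourier matrix. The shift `(k-1)/2`
in `ξ_n` only multiplies each column of `(exp (i ξ_n(I)_l J_m))` by a unimodular factor, so
`a_J(ξ_n(I)) · conj a_J(ξ_n(I')) = det F_{I,J} · conj det F_{I',J}`. By the Cauchy–Binet
formula the sum of these over `J` is `det (F_{I,·} F_{I',·}ᴴ)`, and `F Fᴴ = n · 1` turns it
into `n^k det (1_{I,I'}) = n^k δ_{I,I'}`. Finally `V(ξ_n(I))` is a Vandermonde determinant in
the distinct roots of unity `e^{i ξ_n(I)_l}`, hence nonzero, so the `w^{(I)}` are nonzero and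
pairwise orthogonal.
-/

noncomputable section

open Finset

namespace Paper

/-- `B_{k,n}` as the type of strictly decreasing `k`-tuples with values in `{0,…,n-1}`. -/
abbrev Conf (k n : ℕ) := {I : Fin k → Fin n // ∀ i j : Fin k, i < j → I j < I i}

/-- An element of `B_{k,n}` viewed as an integer vector. -/
def cv {k n : ℕ} (I : Conf k n) : Fin k → ℤ := fun i => ((I.val i : ℕ) : ℤ)

end Paper

theorem Tuple.sort_comp_eq_inv_of_strictMono {k : ℕ} {ι : Type*} [LinearOrder ι]
    {s : Fin k → ι} (hs : StrictMono s) (π : Equiv.Perm (Fin k)) : Tuple.sort (s ∘ π) = π⁻¹ := by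
  refine ((Tuple.eq_sort_iff).2 ⟨?_, fun i j hij hfij => ?_⟩).symm
  · simpa [Function.comp_def] using hs.monotone
  · simp only [Function.comp_apply, Equiv.Perm.coe_inv, Equiv.apply_symm_apply] at hfij
    exact absurd (hs.injective hfij) hij.ne

theorem Fintype.sum_eq_sum_strictMono_sum_perm {k : ℕ} {ι M : Type*} [Fintype ι]
    [LinearOrder ι] [AddCommMonoid M] (F : (Fin k → ι) → M)
    (hF : ∀ g, ¬ Function.Injective g → F g = 0) :
    ∑ g, F g =
      ∑ s : {s : Fin k → ι // StrictMono s}, ∑ π : Equiv.Perm (Fin k), F (s.1 ∘ π) := by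
  rw [← Fintype.sum_prod_type']
  symm
  refine Finset.sum_bij_ne_zero (fun p _ _ => p.1.1 ∘ p.2) (fun _ _ _ => mem_univ _) ?_ ?_
    (fun _ _ _ => rfl)
  · rintro ⟨⟨s, hs⟩, π⟩ - - ⟨⟨t, ht⟩, τ⟩ - - h
    have hπ : π = τ := by
      simpa using (Tuple.sort_comp_eq_inv_of_strictMono hs π).symm.trans
        ((congrArg Tuple.sort h).trans (Tuple.sort_comp_eq_inv_of_strictMono ht τ))
    subst hπ
    simp only [Prod.mk.injEq, Subtype.mk.injEq, and_true]
    funext i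
    simpa using congrFun h (π⁻¹ i)
  · intro g _ hg
    have hinj : Function.Injective g := by_contra fun h => hg (hF g h)
    refine ⟨(⟨g ∘ Tuple.sort g, (Tuple.monotone_sort g).strictMono_of_injective
      (hinj.comp (Tuple.sort g).injective)⟩, (Tuple.sort g)⁻¹), mem_univ _, ?_, ?_⟩
    · simpa [Function.comp_def] using hg
    · ext i; simp

namespace Matrix

variable {R : Type*} [CommRing R]

theorem det_mul_eq_sum_det_submatrix_mul_prod {m ι : Type*} [Fintype m] [DecidableEq m]
    [Fintype ι] (A : Matrix m ι R) (B : Matrix ι m R) :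
    (A * B).det = ∑ g : m → ι, (A.submatrix id g).det * ∏ i, B (g i) i := by
  simp only [det_apply', mul_apply, prod_univ_sum, Fintype.piFinset_univ, mul_sum, sum_mul,
    submatrix_apply, id, prod_mul_distrib, mul_assoc]
  exact Finset.sum_comm

theorem det_mul_eq_sum_strictMono {k : ℕ} {ι : Type*} [Fintype ι] [LinearOrder ι]
    (A : Matrix (Fin k) ι R) (B : Matrix ι (Fin k) R) :
    (A * B).det = ∑ s : {s : Fin k → ι // StrictMono s},
      (A.submatrix id s.1).det * (B.submatrix s.1 id).det := by
  rw [det_mul_eq_sum_det_submatrix_mul_prod, Fintype.sum_eq_sum_strictMono_sum_perm]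
  · refine sum_congr rfl fun s _ => ?_
    simp only [det_apply' (B.submatrix s.1 id), mul_sum]
    refine sum_congr rfl fun π _ => ?_
    rw [show A.submatrix id (s.1 ∘ π) = (A.submatrix id s.1).submatrix id π from rfl,
      det_permute']
    simp only [submatrix_apply, id, Function.comp_apply]
    ring
  · intro g hg
    obtain ⟨i, j, hij, hne⟩ := Function.not_injective_iff.1 hg
    rw [det_zero_of_column_eq hne (fun l => by simp [hij]), zero_mul]

theorem det_mul_eq_sum_strictAnti {k : ℕ} {ι : Type*} [Fintype ι] [LinearOrder ι]
    (A : Matrix (Fin k) ι R) (B : Matrix ι (Fin k) R) :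
    (A * B).det = ∑ s : {s : Fin k → ι // StrictAnti s},
      (A.submatrix id s.1).det * (B.submatrix s.1 id).det :=
  det_mul_eq_sum_strictMono (ι := ιᵒᵈ) A B

theorem det_mul_conjTranspose_eq_sum_strictAnti [StarRing R] {k : ℕ} {ι : Type*} [Fintype ι]
    [LinearOrder ι] (A A' : Matrix (Fin k) ι R) :
    (A * A'ᴴ).det = ∑ s : {s : Fin k → ι // StrictAnti s},
      (A.submatrix id s.1).det * star (A'.submatrix id s.1).det := by
  simp only [det_mul_eq_sum_strictAnti, ← conjTranspose_submatrix, det_conjTranspose]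

theorem det_one_submatrix_of_strictAnti {k : ℕ} {α : Type*} [LinearOrder α] {f g : Fin k → α}
    (hf : StrictAnti f) (hg : StrictAnti g) :
    ((1 : Matrix α α R).submatrix f g).det = if f = g then 1 else 0 := by
  split_ifs with hfg
  · rw [hfg, submatrix_one g hg.injective, det_one]
  · have hsub : ¬ Set.range f ⊆ Set.range g := fun hsub => hfg <| (hf.range_inj hg).1 <|
      Set.eq_of_subset_of_ncard_le hsub (by rw [Set.ncard_range_of_injective hf.injective,
        Set.ncard_range_of_injective hg.injective]) (Set.finite_range g)
    obtain ⟨_, ⟨l, rfl⟩, hl⟩ := Set.not_subset.1 hsub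
    exact det_eq_zero_of_row_eq_zero l fun m => one_apply_ne fun h => hl ⟨m, h.symm⟩

end Matrix

theorem linearIndependent_of_ne_zero_of_sum_star_mul_eq_zero {ι κ 𝕜 : Type*} [RCLike 𝕜]
    [Fintype κ] {v : ι → κ → 𝕜} (hz : ∀ i, v i ≠ 0)
    (ho : Pairwise fun i i' => ∑ j, star (v i j) * v i' j = 0) : LinearIndependent 𝕜 v := by
  have h := linearIndependent_of_ne_zero_of_inner_eq_zero (𝕜 := 𝕜)
    (v := fun i => WithLp.toLp 2 (v i))
    (fun i h => hz i (by simpa using congrArg WithLp.ofLp h))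
    (fun i i' hii' => by simpa [PiLp.inner_apply, RCLike.inner_apply, mul_comm] using ho hii')
  exact h.map' (WithLp.linearEquiv 2 𝕜 (κ → 𝕜)).toLinearMap (LinearEquiv.ker _)

namespace Paper

open Complex ComplexConjugate Matrix
open scoped Real

def dftMatrix (n : ℕ) : Matrix (Fin n) (Fin n) ℂ :=
  of fun a b => exp (2 * π * Complex.I / n) ^ ((a : ℕ) * b)

theorem dftMatrix_mul_conjTranspose (n : ℕ) :
    dftMatrix n * (dftMatrix n)ᴴ = (n : ℂ) • 1 := by
  ext a b
  have hn : n ≠ 0 := a.pos.ne'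
  simp only [mul_apply, dftMatrix, of_apply, conjTranspose_apply, Matrix.smul_apply, one_apply,
    smul_eq_mul]
  set ζ := exp (2 * π * Complex.I / n)
  have hζ : IsPrimitiveRoot ζ n := isPrimitiveRoot_exp n hn
  have hstar (m : ℕ) : star (ζ ^ m) = (ζ ^ m)⁻¹ :=
    (inv_eq_conj (by rw [norm_pow, hζ.norm'_eq_one hn, one_pow])).symm
  set x := ζ ^ (a : ℕ) * (ζ ^ (b : ℕ))⁻¹
  have hterm (j : Fin n) : ζ ^ ((a : ℕ) * j) * star (ζ ^ ((b : ℕ) * j)) = x ^ (j : ℕ) := by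
    rw [hstar, mul_pow, inv_pow, ← pow_mul, ← pow_mul]
  rw [Finset.sum_congr rfl fun j _ => hterm j, Fin.sum_univ_eq_sum_range (x ^ ·)]
  split_ifs with hab
  · simp [x, hab, mul_inv_cancel₀ (pow_ne_zero _ (hζ.ne_zero hn))]
  · have hx1 : x ≠ 1 := fun h => hab <| Fin.ext <| hζ.pow_inj a.isLt b.isLt <|
      by simpa [x, mul_inv_eq_one₀ (pow_ne_zero _ (hζ.ne_zero hn))] using h
    have hxn : x ^ n = 1 := by
      rw [mul_pow, inv_pow, pow_right_comm ζ _ n, pow_right_comm ζ _ n, hζ.pow_eq_one, one_pow,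
        one_pow, inv_one, mul_one]
    rw [geom_sum_eq hx1, hxn, sub_self, zero_div, mul_zero]

variable {k n : ℕ}

theorem Conf.strictAnti (I : Conf k n) : StrictAnti I.1 := fun i j h => I.2 i j h

theorem sum_det_dftMatrix_submatrix_mul_conj (I I' : Conf k n) :
    ∑ J : Conf k n, ((dftMatrix n).submatrix I.1 J.1).det *
      conj ((dftMatrix n).submatrix I'.1 J.1).det = if I = I' then (n : ℂ) ^ k else 0 := by
  have hprod : (dftMatrix n).submatrix I.1 id * ((dftMatrix n).submatrix I'.1 id)ᴴ =
      (n : ℂ) • (1 : Matrix (Fin n) (Fin n) ℂ).submatrix I.1 I'.1 := by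
    rw [conjTranspose_submatrix, ← submatrix_mul _ _ _ _ _ Function.bijective_id,
      dftMatrix_mul_conjTranspose]
    rfl
  have h := det_mul_conjTranspose_eq_sum_strictAnti ((dftMatrix n).submatrix I.1 id)
    ((dftMatrix n).submatrix I'.1 id)
  rw [hprod, det_smul, det_one_submatrix_of_strictAnti I.strictAnti I'.strictAnti,
    Fintype.card_fin] at h
  refine (Fintype.sum_equiv (Equiv.refl _) _ _ fun _ => rfl).trans (h.symm.trans ?_)
  simp only [Subtype.ext_iff, mul_ite, mul_one, mul_zero]

theorem cexp_I_mul_xi_mul (I : Conf k n) (l : Fin k) (b : ℕ) :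
    exp (Complex.I * xi k n (cv I) l * (b : ℤ)) =
      exp (2 * π * Complex.I / n) ^ ((I.1 l : ℕ) * b) *
        exp (↑(-(π * (k - 1) * b / n)) * Complex.I) := by
  rw [← exp_nat_mul, ← exp_add]
  congr 1
  simp only [xi, cv]
  push_cast
  ring

theorem aJ_cv_xi (I J : Conf k n) :
    aJ k (cv J) (xi k n (cv I)) =
      (∏ m, exp (↑(-(π * (k - 1) * (J.1 m : ℕ) / n)) * Complex.I)) *
        ((dftMatrix n).submatrix I.1 J.1).det := by
  rw [aJ, ← det_mul_row]
  congr 1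
  ext l m
  simp only [of_apply, submatrix_apply, dftMatrix, cv, cexp_I_mul_xi_mul, mul_comm]

theorem aJ_cv_xi_mul_conj (I I' J : Conf k n) :
    aJ k (cv J) (xi k n (cv I)) * conj (aJ k (cv J) (xi k n (cv I'))) =
      ((dftMatrix n).submatrix I.1 J.1).det * conj ((dftMatrix n).submatrix I'.1 J.1).det := by
  rw [aJ_cv_xi, aJ_cv_xi, map_mul]
  set P := ∏ m, exp (↑(-(π * (k - 1) * (J.1 m : ℕ) / n)) * Complex.I)
  have hP : P * conj P = 1 := by
    rw [mul_conj', norm_prod, Finset.prod_eq_one fun m _ => norm_exp_ofReal_mul_I _]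
    norm_num
  linear_combination ((dftMatrix n).submatrix I.1 J.1).det *
    conj ((dftMatrix n).submatrix I'.1 J.1).det * hP

theorem sum_SJ_mul_conj (I I' : Conf k n) :
    ∑ J : Conf k n, SJ k (cv J) (xi k n (cv I)) * conj (SJ k (cv J) (xi k n (cv I'))) =
      if I = I' then (n : ℂ) ^ k / (‖Vdm k (xi k n (cv I))‖ ^ 2 : ℝ) else 0 := by
  simp only [SJ, map_div₀, div_mul_div_comm, ← sum_div, aJ_cv_xi_mul_conj,
    sum_det_dftMatrix_submatrix_mul_conj]
  split_ifs with h
  · rw [h, mul_conj']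
    push_cast
    rfl
  · exact zero_div _

theorem Vdm_eq (u : Fin k → ℝ) :
    Vdm k u = Equiv.Perm.sign (Fin.revPerm : Equiv.Perm (Fin k)) *
      (vandermonde fun l => exp (Complex.I * u l)).det := by
  rw [Vdm, aJ, ← det_permute']
  congr 1
  ext l m
  have hm := m.isLt
  rw [of_apply, submatrix_apply, vandermonde_apply, id, Fin.revPerm_apply, Fin.val_rev,
    ← exp_nat_mul, I0]
  congr 1
  push_cast [Nat.cast_sub (by omega : (m : ℕ) + 1 ≤ k)]
  ring

theorem Vdm_ne_zero_iff (u : Fin k → ℝ) :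
    Vdm k u ≠ 0 ↔ Function.Injective fun l => exp (Complex.I * u l) := by
  simp [Vdm_eq, det_vandermonde_ne_zero_iff]

theorem Vdm_xi_ne_zero (I : Conf k n) : Vdm k (xi k n (cv I)) ≠ 0 := by
  refine (Vdm_ne_zero_iff _).2 fun l m h => ?_
  have hn : n ≠ 0 := (I.1 l).pos.ne'
  have hexp (i : Fin k) := cexp_I_mul_xi_mul I i 1
  simp only [Nat.cast_one, Int.cast_one, mul_one] at hexp
  simp only [hexp, mul_left_inj' (exp_ne_zero _)] at h
  exact I.strictAnti.injective <|
    Fin.ext <| (isPrimitiveRoot_exp n hn).pow_inj (I.1 l).isLt (I.1 m).isLt h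

theorem stmt10_general (k n : ℕ) :
    (∀ I I' : Conf k n,
      (∑ J : Conf k n, SJ k (cv J) (xi k n (cv I)) *
          (starRingEnd ℂ) (SJ k (cv J) (xi k n (cv I')))) =
        if I = I' then ((n : ℂ) ^ k / (‖Vdm k (xi k n (cv I))‖ ^ 2 : ℝ)) else 0) ∧
    LinearIndependent ℂ
      (fun I : Conf k n => fun J : Conf k n =>
        (starRingEnd ℂ) (SJ k (cv J) (xi k n (cv I)))) := by
  refine ⟨sum_SJ_mul_conj, linearIndependent_of_ne_zero_of_sum_star_mul_eq_zero
    (fun I hI => ?_) (fun I I' hII' => by simpa [hII'] using sum_SJ_mul_conj I I')⟩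
  have hnk : (n : ℂ) ^ k ≠ 0 := by
    rcases k.eq_zero_or_pos with rfl | hk
    · exact pow_zero (n : ℂ) ▸ one_ne_zero
    · exact pow_ne_zero _ (Nat.cast_ne_zero.2 (I.1 ⟨0, hk⟩).pos.ne')
  have hV : ((‖Vdm k (xi k n (cv I))‖ ^ 2 : ℝ) : ℂ) ≠ 0 := by
    exact_mod_cast pow_ne_zero 2 (norm_ne_zero_iff.2 (Vdm_xi_ne_zero I))
  have h := sum_SJ_mul_conj I I
  simp only [fun J => congrFun hI J, Pi.zero_apply, mul_zero, sum_const_zero, if_pos] at h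
  exact div_ne_zero hnk hV h.symm

/-- the orthogonality relations
`Σ_{J∈B_{k,n}} S_J(ξ_n(I)) conj(S_J(ξ_n(I'))) = δ_{I,I'} n^k/|V(ξ_n(I))|²`; in particular the
vectors `w^{(I)} = (conj S_J(ξ_n(I)))_J` form an orthogonal (hence linearly independent) family. -/
theorem stmt10 (k n : ℕ) (hk : 1 ≤ k) (hkn : k ≤ n) :
    (∀ I I' : Conf k n,
      (∑ J : Conf k n, SJ k (cv J) (xi k n (cv I)) *
          (starRingEnd ℂ) (SJ k (cv J) (xi k n (cv I')))) =
        if I = I' then ((n : ℂ) ^ k / (‖Vdm k (xi k n (cv I))‖ ^ 2 : ℝ)) else 0) ∧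
    LinearIndependent ℂ
      (fun I : Conf k n => fun J : Conf k n =>
        (starRingEnd ℂ) (SJ k (cv J) (xi k n (cv I)))) :=
  stmt10_general k n

end Paper
end
end

section
/- Let J = (J_1 > J_2 > … > J_k) be a strictly decreasing integer vector with J_1 − J_k < n, and let J^{(n)} be the unique element of B_{k,n} such that the set of residues {J^{(n)}_i mod n : 1 ≤ i ≤ k} equals {J_i mod n : 1 ≤ i ≤ k}. Then for every function μ: B_{k,n} → ℂ: (1/n^k) · Σ_{I∈B_{k,n}} μ(I) · |V(ξ_n(I))|² · S_J(ξ_n(I)) = S_J(ξ_n(I_0)) · Σ_{I∈B_{k,n}} ( |V(ξ_n(I))| · |V(ξ_n(I_0))| / n^k ) · S_I(ξ_n(J^{(n)})) · μ(I). (The left-hand side is the continuous Fourier transform Φ[ξ_n(μ)](J) on the unitary group U(k), and the sum on the right is the discrete Fourier transform Φ_n[μ](J^{(n)}) on B_{k,n}.) -/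
/-!
Write `ζ = e^{2πi/n}` (`unitRoot n`) and `φ(Y) = e^{iπ(k-1)ΣY/n}` (`shiftPhase k n Y`).
Since `ξ_n(X) = (2π/n) X - (π/n)(k - 1)`, the alternant factors as
`a_Y(ξ_n X) = det (ζ ^ (X_l Y_m)) / φ(Y)`. The determinant `det (ζ ^ (X_l Y_m))` (`powDet`) is
symmetric in `X` and `Y` and, up to the sign of a permutation, depends on `Y` only modulo `n`;
this is how `J` is traded for `J^{(n)}`. For `X ∈ B_{k,n}` all differences `ξ_l - ξ_m` with
`l < m` lie in `(0, 2π)`, so writing `e^{ib} - e^{ia} = -2i e^{i(a+b)/2} sin((a-b)/2)` in the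
Vandermonde product gives `V(ξ_n X) = c · φ(X) · |V(ξ_n X)|` with `c` independent of `X`.
Substituting these facts, the two sides agree summand by summand.
-/

noncomputable section

open Finset

open Complex
open scoped Real

theorem Complex.exp_mul_I_sub_exp_mul_I (a b : ℝ) :
    exp (b * I) - exp (a * I) =
      -I * exp (((a + b) / 2 : ℝ) * I) * (2 * Real.sin ((a - b) / 2) : ℝ) := by
  have hb : exp (b * I) = exp ((a + b) / 2 * I) * exp (-((a - b) / 2) * I) := by
    rw [← exp_add]; ring_nf
  have ha : exp (a * I) = exp ((a + b) / 2 * I) * exp ((a - b) / 2 * I) := by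
    rw [← exp_add]; ring_nf
  push_cast
  rw [sin, hb, ha]
  linear_combination
    (exp ((a + b) / 2 * I) * (exp (-((a - b) / 2) * I) - exp ((a - b) / 2 * I))) * I_sq

theorem Fin.sum_sum_Ioi_add {R : Type*} [Ring R] {k : ℕ} (f : Fin k → R) :
    ∑ i, ∑ j ∈ Ioi i, (f i + f j) = (k - 1) * ∑ i, f i := by
  have hswap : ∑ i, ∑ j ∈ Ioi i, f j = ∑ j, ∑ _i ∈ Iio j, f j :=
    sum_comm' fun i j => by simp [and_comm]
  rw [sum_congr rfl fun i _ => sum_add_distrib, sum_add_distrib, hswap, ← sum_add_distrib,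
    mul_sum]
  refine sum_congr rfl fun i _ => ?_
  rw [Finset.sum_const, Finset.sum_const, ← add_smul, Fin.card_Ioi, Fin.card_Iio, nsmul_eq_mul]
  have hi := i.isLt
  rw [Nat.sub_add_cancel (by omega), Nat.cast_sub (by omega), Nat.cast_one]

theorem Function.Injective.exists_perm_of_image_univ_eq {ι α : Type*} [Fintype ι]
    [DecidableEq α] {f g : ι → α} (hg : g.Injective) (h : univ.image f = univ.image g) :
    ∃ σ : Equiv.Perm ι, ∀ i, f i = g (σ i) := by
  have hf : f.Injective := by
    rw [← Set.injOn_univ, ← coe_univ, ← card_image_iff, h, card_image_of_injective _ hg]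
  have hmem : ∀ i, ∃ j, g j = f i := fun i => by
    simpa [h] using mem_image_of_mem f (mem_univ i)
  choose σ hσ using hmem
  have hσ_inj : σ.Injective := fun a b hab => hf (by rw [← hσ a, ← hσ b, hab])
  exact ⟨Equiv.ofBijective σ hσ_inj.bijective_of_finite, fun i => (hσ i).symm⟩

namespace Paper

section PowDet

variable {ι R : Type*} [Fintype ι] [DecidableEq ι] [CommRing R]

def powDet (ζ : Rˣ) (X Y : ι → ℤ) : R :=
  (Matrix.of fun l m => ((ζ ^ (X l * Y m) : Rˣ) : R)).det

theorem powDet_comm (ζ : Rˣ) (X Y : ι → ℤ) : powDet ζ X Y = powDet ζ Y X := by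
  rw [powDet, ← Matrix.det_transpose]
  congr 1
  ext l m
  simp [mul_comm]

theorem powDet_eq_sign_mul_of_modEq {ζ : Rˣ} {n : ℕ} (hζ : ζ ^ n = 1) (X : ι → ℤ)
    {Y Y' : ι → ℤ} (σ : Equiv.Perm ι) (hY : ∀ m, Y m ≡ Y' (σ m) [ZMOD n]) :
    powDet ζ X Y = Equiv.Perm.sign σ * powDet ζ X Y' := by
  have hM : (Matrix.of fun l m => ((ζ ^ (X l * Y m) : Rˣ) : R)) =
      (Matrix.of fun l m => ((ζ ^ (X l * Y' m) : Rˣ) : R)).submatrix id σ := by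
    ext l m
    simp only [Matrix.submatrix_apply, Matrix.of_apply, id]
    rw [zpow_eq_zpow_emod' _ hζ, zpow_eq_zpow_emod' (X l * Y' (σ m)) hζ, (hY m).mul_left]
  rw [powDet, hM, Matrix.det_permute']
  rfl

end PowDet

section Vandermonde

variable {k : ℕ}

def vdmSign (k : ℕ) : ℂ :=
  (Equiv.Perm.sign (Fin.revPerm : Equiv.Perm (Fin k)) : ℂ) * (-I) ^ ∑ i : Fin k, #(Ioi i)

def chordProd (u : Fin k → ℝ) : ℝ := ∏ i, ∏ j ∈ Ioi i, 2 * Real.sin ((u i - u j) / 2)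

theorem norm_vdmSign (k : ℕ) : ‖vdmSign k‖ = 1 := by
  rcases Int.units_eq_one_or (Equiv.Perm.sign (Fin.revPerm : Equiv.Perm (Fin k))) with h | h <;>
    simp [vdmSign, h]

theorem Vdm_eq_sign_mul_prod (u : Fin k → ℝ) :
    Vdm k u = Equiv.Perm.sign (Fin.revPerm : Equiv.Perm (Fin k)) *
      ∏ i, ∏ j ∈ Ioi i, (exp (u j * I) - exp (u i * I)) := by
  have hM : (Matrix.of fun l m : Fin k => exp (I * u l * (I0 k m : ℂ))) =
      (Matrix.vandermonde fun l => exp (u l * I)).submatrix id Fin.revPerm := by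
    ext l m
    have hm : (I0 k m : ℂ) = ((Fin.rev m : ℕ) : ℂ) := by
      rw [I0, Fin.val_rev, Nat.cast_sub m.isLt]
      push_cast
      ring
    simp only [Matrix.submatrix_apply, Matrix.of_apply, Matrix.vandermonde_apply, id,
      Fin.revPerm_apply, hm, ← exp_nat_mul]
    ring_nf
  rw [Vdm, aJ, hM, Matrix.det_permute', Matrix.det_vandermonde]

theorem Vdm_eq_vdmSign_mul_chordProd (u : Fin k → ℝ) :
    Vdm k u = vdmSign k * exp (((k - 1) * ∑ i, u i / 2 : ℝ) * I) * chordProd u := by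
  have hpairs : ∑ i, ∑ j ∈ Ioi i, (u i + u j) / 2 = (k - 1) * ∑ i, u i / 2 := by
    simp only [add_div, Fin.sum_sum_Ioi_add]
  rw [Vdm_eq_sign_mul_prod]
  simp only [exp_mul_I_sub_exp_mul_I, prod_mul_distrib, prod_const, prod_pow_eq_pow_sum,
    ← exp_sum, ← ofReal_prod, vdmSign, chordProd, ← hpairs, ofReal_mul, ofReal_sum, sum_mul,
    ofReal_pow]
  ring

theorem norm_Vdm (u : Fin k → ℝ) : ‖Vdm k u‖ = |chordProd u| := by
  rw [Vdm_eq_vdmSign_mul_chordProd, norm_mul, norm_mul, norm_vdmSign, norm_exp_ofReal_mul_I,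
    norm_real, Real.norm_eq_abs, one_mul, one_mul]

variable {u : Fin k → ℝ}

theorem chordProd_pos (hu : ∀ i j, i < j → u i - u j ∈ Set.Ioo 0 (2 * π)) :
    0 < chordProd u :=
  prod_pos fun i _ => prod_pos fun j hj => by
    obtain ⟨hpos, hlt⟩ := hu i j (mem_Ioi.mp hj)
    have := Real.sin_pos_of_pos_of_lt_pi (x := (u i - u j) / 2) (by linarith) (by linarith)
    linarith

theorem Vdm_ne_zero_s11 (hu : ∀ i j, i < j → u i - u j ∈ Set.Ioo 0 (2 * π)) : Vdm k u ≠ 0 :=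
  norm_ne_zero_iff.mp <| by
    rw [norm_Vdm, abs_of_pos (chordProd_pos hu)]
    exact (chordProd_pos hu).ne'

theorem Vdm_eq_mul_norm (hu : ∀ i j, i < j → u i - u j ∈ Set.Ioo 0 (2 * π)) :
    Vdm k u = vdmSign k * exp (((k - 1) * ∑ i, u i / 2 : ℝ) * I) * ‖Vdm k u‖ := by
  rw [norm_Vdm, abs_of_pos (chordProd_pos hu), ← Vdm_eq_vdmSign_mul_chordProd]

end Vandermonde

def OrderedWithinPeriod {k : ℕ} (n : ℕ) (X : Fin k → ℤ) : Prop :=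
  ∀ i j, i < j → 0 < X i - X j ∧ X i - X j < n

def unitRoot (n : ℕ) : ℂˣ := Units.mk0 (exp (2 * π * I / n)) (exp_ne_zero _)

def shiftPhase (k n : ℕ) (Y : Fin k → ℤ) : ℂ :=
  exp (((k - 1) * π / n * ∑ m, (Y m : ℝ) : ℝ) * I)

theorem unitRoot_pow_self (n : ℕ) : unitRoot n ^ n = 1 := by
  rcases eq_or_ne n 0 with rfl | hn
  · exact pow_zero _
  · ext
    rw [Units.val_pow_eq_pow_val, unitRoot, Units.val_mk0, ← exp_nat_mul,
      mul_div_cancel₀ _ (Nat.cast_ne_zero.mpr hn), exp_two_pi_mul_I, Units.val_one]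

theorem OrderedWithinPeriod.injective_emod {k n : ℕ} {X : Fin k → ℤ}
    (hX : OrderedWithinPeriod n X) : Function.Injective fun i => X i % n := by
  have hne : ∀ a b, a < b → X a % n ≠ X b % n := fun a b hab h => by
    obtain ⟨hpos, hlt⟩ := hX a b hab
    have := Int.eq_zero_of_dvd_of_nonneg_of_lt hpos.le hlt (Int.ModEq.dvd h.symm)
    omega
  intro a b h
  rcases lt_trichotomy a b with hab | rfl | hab
  exacts [(hne a b hab h).elim, rfl, (hne b a hab h.symm).elim]

theorem cv_orderedWithinPeriod {k n : ℕ} (I : Conf k n) : OrderedWithinPeriod n (cv I) := by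
  intro i j hij
  have hlt := Fin.lt_def.mp (I.2 i j hij)
  have hi := (I.val i).isLt
  simp only [cv]
  omega

theorem I0_orderedWithinPeriod {k n : ℕ} (hkn : k ≤ n) : OrderedWithinPeriod n (I0 k) := by
  intro i j hij
  have hlt := Fin.lt_def.mp hij
  have hj := j.isLt
  simp only [I0]
  omega

section Xi

variable {k n : ℕ}

theorem xi_sub (X : Fin k → ℤ) (i j : Fin k) :
    xi k n X i - xi k n X j = 2 * π / n * (X i - X j) := by
  simp only [xi]
  ring

theorem OrderedWithinPeriod.xi_sub_mem_Ioo {X : Fin k → ℤ} (hX : OrderedWithinPeriod n X)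
    (i j : Fin k) (hij : i < j) : xi k n X i - xi k n X j ∈ Set.Ioo 0 (2 * π) := by
  obtain ⟨hpos, hlt⟩ := hX i j hij
  have hpos' : (0 : ℝ) < X i - X j := by exact_mod_cast hpos
  have hlt' : (X i - X j : ℝ) < n := by exact_mod_cast hlt
  have hn : (0 : ℝ) < n := hpos'.trans hlt'
  rw [xi_sub]
  constructor
  · positivity
  · calc 2 * π / n * (X i - X j) < 2 * π / n * n := by gcongr
      _ = 2 * π := div_mul_cancel₀ _ hn.ne'

theorem aJ_xi (X Y : Fin k → ℤ) :
    aJ k Y (xi k n X) = powDet (unitRoot n) X Y / shiftPhase k n Y := by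
  have hM : (Matrix.of fun l m => exp (I * (xi k n X l : ℂ) * (Y m : ℂ))) =
      Matrix.of fun l m => exp (-((k - 1) * π / n * Y m : ℝ) * I) *
        Matrix.of (fun l m => ((unitRoot n ^ (X l * Y m) : ℂˣ) : ℂ)) l m := by
    ext l m
    rw [Matrix.of_apply, Matrix.of_apply, Matrix.of_apply, Units.val_zpow_eq_zpow_val, unitRoot,
      Units.val_mk0, ← exp_int_mul, ← exp_add]
    congr 1
    simp only [xi]
    push_cast
    field_simp
    ring
  rw [div_eq_mul_inv, shiftPhase, ← exp_neg, aJ, hM, Matrix.det_mul_row, ← exp_sum, powDet,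
    mul_comm]
  congr 2
  push_cast
  simp only [mul_sum, sum_mul, neg_mul, sum_neg_distrib]

theorem Vdm_xi_eq {X : Fin k → ℤ} (hX : OrderedWithinPeriod n X) :
    Vdm k (xi k n X) = vdmSign k * exp ((-(k - 1) * π / n * (k * (k - 1) / 2) : ℝ) * I) *
      shiftPhase k n X * ‖Vdm k (xi k n X)‖ := by
  conv_lhs => rw [Vdm_eq_mul_norm hX.xi_sub_mem_Ioo]
  rw [shiftPhase, mul_assoc (vdmSign k) (exp _) (exp _), ← exp_add, ← add_mul, ← ofReal_add]
  congr 4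
  simp only [xi, ← sum_div, ← mul_sum, sum_sub_distrib, sum_const, card_univ, Fintype.card_fin,
    nsmul_eq_mul]
  push_cast
  ring

theorem norm_Vdm_sq_mul_SJ_xi_eq {X Z J : Fin k → ℤ} (hX : OrderedWithinPeriod n X)
    (hZ : OrderedWithinPeriod n Z) (h0 : OrderedWithinPeriod n (I0 k)) (σ : Equiv.Perm (Fin k))
    (hJ : ∀ m, J m ≡ Z (σ m) [ZMOD n]) :
    ((‖Vdm k (xi k n X)‖ ^ 2 : ℝ) : ℂ) * SJ k J (xi k n X) =
      SJ k J (xi k n (I0 k)) *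
        ((‖Vdm k (xi k n X)‖ * ‖Vdm k (xi k n (I0 k))‖ : ℝ) : ℂ) * SJ k X (xi k n Z) := by
  have hVZ : Vdm k (xi k n Z) = powDet (unitRoot n) (I0 k) Z / shiftPhase k n (I0 k) := by
    rw [powDet_comm]
    exact aJ_xi Z (I0 k)
  have hPZ : powDet (unitRoot n) (I0 k) Z ≠ 0 :=
    left_ne_zero_of_mul (hVZ ▸ Vdm_ne_zero_s11 hZ.xi_sub_mem_Ioo)
  have hrX : (‖Vdm k (xi k n X)‖ : ℂ) ≠ 0 := by
    exact_mod_cast norm_ne_zero_iff.mpr (Vdm_ne_zero_s11 hX.xi_sub_mem_Ioo)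
  have hr0 : (‖Vdm k (xi k n (I0 k))‖ : ℂ) ≠ 0 := by
    exact_mod_cast norm_ne_zero_iff.mpr (Vdm_ne_zero_s11 h0.xi_sub_mem_Ioo)
  have hsign : vdmSign k ≠ 0 := norm_ne_zero_iff.mp (by rw [norm_vdmSign]; exact one_ne_zero)
  have hVX := Vdm_xi_eq hX
  have hV0 := Vdm_xi_eq h0
  -- so that `hVX` and `hV0` do not also rewrite inside the norms
  set rX := ‖Vdm k (xi k n X)‖
  set r0 := ‖Vdm k (xi k n (I0 k))‖
  rw [SJ, SJ, SJ, aJ_xi, aJ_xi, aJ_xi, hVZ, hVX, hV0,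
    powDet_eq_sign_mul_of_modEq (unitRoot_pow_self n) X σ hJ,
    powDet_eq_sign_mul_of_modEq (unitRoot_pow_self n) (I0 k) σ hJ, powDet_comm _ Z X]
  push_cast
  field_simp [shiftPhase, exp_ne_zero]

end Xi

/-- the embedding `ξ_n` intertwines the continuous Fourier transform on `U(k)`
with the discrete Fourier transform on `B_{k,n}`:
`(1/n^k) Σ_I μ(I)|V(ξ_n(I))|² S_J(ξ_n(I)) = S_J(ξ_n(I_0)) · Φ_n[μ](J^{(n)})`. -/
theorem stmt11 (k n : ℕ) (hkn : k ≤ n) (J : Fin k → ℤ) (Jn : Conf k n)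
    (hJn : (Finset.univ.image fun i : Fin k => J i % (n : ℤ)) =
      (Finset.univ.image fun i : Fin k => cv Jn i % (n : ℤ))) :
    ∀ μ : Conf k n → ℂ,
      (1 / (n : ℂ) ^ k) *
          ∑ I : Conf k n, μ I * (((‖Vdm k (xi k n (cv I))‖) ^ 2 : ℝ) : ℂ) *
            SJ k J (xi k n (cv I)) =
        SJ k J (xi k n (I0 k)) *
          ∑ I : Conf k n,
            ((‖Vdm k (xi k n (cv I))‖ * ‖Vdm k (xi k n (I0 k))‖ /
                (n : ℝ) ^ k : ℝ) : ℂ) *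
              SJ k (cv I) (xi k n (cv Jn)) * μ I := by
  intro μ
  obtain ⟨σ, hσ⟩ :=
    Function.Injective.exists_perm_of_image_univ_eq (cv_orderedWithinPeriod Jn).injective_emod hJn
  have key (I : Conf k n) := norm_Vdm_sq_mul_SJ_xi_eq (cv_orderedWithinPeriod I)
    (cv_orderedWithinPeriod Jn) (I0_orderedWithinPeriod hkn) σ hσ
  rw [mul_sum, mul_sum]
  refine sum_congr rfl fun I _ => ?_
  push_cast at key ⊢
  linear_combination (μ I / n ^ k) * key I

end Paper
end
end

section
/- (i) For every integer k ≥ 2 and every strictly decreasing integer vector I of length k such that Ĩ ≠ Ĩ_0 (equivalently, I is not of the form I_0 + ℓ𝟙 for an integer ℓ): ‖Ĩ‖_∞² ≤ k · K(Ĩ). (ii) Consequently, for any integers n ≥ k ≥ 2 and any probability weight p on B_{k,n}: Σ_{J∈B_{k,n}} p(J) · ⟨Ĵ − I_0⟩³ ≤ 2√2 · k³ · Σ_{J∈B_{k,n}} p(J) · ‖J̃‖₂³. -/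
noncomputable section

open Finset

namespace Paper

/-- The centered vector `x̃ = x - (⟨x⟩/k)𝟙` of an integer vector. -/
def tilZ (k : ℕ) (I : Fin k → ℤ) : Fin k → ℝ :=
  fun j => (I j : ℝ) - (sz k I : ℝ) / (k : ℝ)

/-- `K(x) = ‖x‖₂² - k(k²-1)/12`. -/
def Kq (k : ℕ) (x : Fin k → ℝ) : ℝ :=
  (∑ j, (x j) ^ 2) - (k : ℝ) * ((k : ℝ) ^ 2 - 1) / 12

/-- The last entry `J_k` of an integer vector. -/
def lastE (k : ℕ) (J : Fin k → ℤ) : ℤ :=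
  if h : 0 < k then J ⟨k - 1, by omega⟩ else 0

/-- `⟨Ĵ - I_0⟩ = ⟨J⟩ - k·J_k - k(k-1)/2`, where `Ĵ = J - J_k𝟙`. -/
def hexc (k : ℕ) (J : Fin k → ℤ) : ℤ := sz k J - (k : ℤ) * lastE k J - sz k (I0 k)

lemma abelSum (f g : ℕ → ℝ) : ∀ m, ∑ i ∈ Finset.range m, f i * g i =
    f m * (∑ i ∈ Finset.range m, g i) +
    ∑ j ∈ Finset.range m, (f j - f (j+1)) * (∑ i ∈ Finset.range (j+1), g i)
  | 0 => by simp
  | (m+1) => by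
    rw [Finset.sum_range_succ (fun i => f i * g i) m,
      Finset.sum_range_succ (fun j => (f j - f (j+1)) * (∑ i ∈ Finset.range (j+1), g i)) m,
      Finset.sum_range_succ g m, abelSum f g m]
    ring

lemma sum_id (m : ℕ) : ∑ i ∈ Finset.range m, (i:ℝ) = m*(m-1)/2 := by
  induction m with
  | zero => simp
  | succ n ih => rw [Finset.sum_range_succ, ih]; push_cast; ring

lemma sum_sq (m : ℕ) : ∑ i ∈ Finset.range m, (i:ℝ)^2 = m*(m-1)*(2*m-1)/6 := by
  induction m with
  | zero => simp
  | succ n ih => rw [Finset.sum_range_succ, ih]; push_cast; ring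

lemma gap {k : ℕ} {I : Fin k → ℤ} (h : ∀ i j : Fin k, i < j → I j < I i) :
    ∀ d : ℕ, ∀ i j : Fin k, (j:ℕ) = (i:ℕ) + d → I j + (d:ℤ) ≤ I i := by
  intro d
  induction d with
  | zero => intro i j hij; have : i = j := Fin.ext (by omega); simp [this]
  | succ n ih =>
    intro i j hij
    have hjlt : (i:ℕ) + n < k := by omega
    have h1 := ih i ⟨(i:ℕ)+n, hjlt⟩ rfl
    have h2 : I j < I ⟨(i:ℕ)+n, hjlt⟩ := h _ _ (by simp [Fin.lt_def]; omega)
    push_cast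
    push_cast at h1
    omega

lemma gap' {k : ℕ} {I : Fin k → ℤ} (h : ∀ i j : Fin k, i < j → I j < I i)
    (i j : Fin k) (hij : (i:ℕ) ≤ (j:ℕ)) : I j + (((j:ℕ):ℤ) - ((i:ℕ):ℤ)) ≤ I i := by
  have := gap h ((j:ℕ) - (i:ℕ)) i j (by omega)
  push_cast at this ⊢
  omega

lemma sum_tilZ (k : ℕ) (hk : 0 < k) (J : Fin k → ℤ) : ∑ i, tilZ k J i = 0 := by
  have hk' : (k:ℝ) ≠ 0 := by positivity
  simp only [tilZ, Finset.sum_sub_distrib, Finset.sum_const, Finset.card_univ,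
    Fintype.card_fin, nsmul_eq_mul]
  rw [mul_div_cancel₀ _ hk']
  simp only [sz]; push_cast; ring

lemma szI0_real (k : ℕ) : ((sz k (I0 k) : ℤ) : ℝ) = (k:ℝ)*((k:ℝ)-1)/2 := by
  simp only [sz, I0]
  push_cast
  rw [Fin.sum_univ_eq_sum_range (fun i => (k:ℝ) - 1 - (i:ℝ)) k]
  rw [Finset.sum_sub_distrib, Finset.sum_const, Finset.card_range, nsmul_eq_mul, sum_id]
  ring

lemma tilZ_I0 (k : ℕ) (hk : 0 < k) (i : Fin k) :
    tilZ k (I0 k) i = ((k:ℝ)-1)/2 - ((i:ℕ):ℝ) := by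
  have hk' : (k:ℝ) ≠ 0 := by positivity
  rw [tilZ, szI0_real]
  simp only [I0]
  push_cast
  field_simp
  ring

set_option maxHeartbeats 1000000 in
lemma part1 (k : ℕ) (hk : 2 ≤ k) (I : Fin k → ℤ)
    (hI : ∀ i j : Fin k, i < j → I j < I i)
    (hne : tilZ k I ≠ tilZ k (I0 k)) :
    ‖tilZ k I‖ ^ 2 ≤ (k : ℝ) * Kq k (tilZ k I) := by
  have hk0 : 0 < k := by omega
  have hkR : (2:ℝ) ≤ (k:ℝ) := by exact_mod_cast hk
  have hkm : k - 1 < k := by omega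
  obtain ⟨c, hc⟩ : ∃ c : Fin k → ℝ, c = fun i => tilZ k I i - tilZ k (I0 k) i := ⟨_, rfl⟩
  have hcd : ∀ i j : Fin k, (i:ℕ) ≤ (j:ℕ) → c j ≤ c i := by
    intro i j hij
    have h1 := gap' hI i j hij
    have h2 : tilZ k (I0 k) i - tilZ k (I0 k) j = ((j:ℕ):ℝ) - ((i:ℕ):ℝ) := by
      rw [tilZ_I0 k hk0 i, tilZ_I0 k hk0 j]; ring
    have h3 : tilZ k I i - tilZ k I j = (I i : ℝ) - (I j : ℝ) := by
      simp only [tilZ]; ring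
    have h4 : ((j:ℕ):ℝ) - ((i:ℕ):ℝ) ≤ (I i : ℝ) - (I j : ℝ) := by
      have : ((I j + (((j:ℕ):ℤ) - ((i:ℕ):ℤ)) : ℤ) : ℝ) ≤ ((I i : ℤ) : ℝ) := by
        exact_mod_cast h1
      push_cast at this
      linarith
    simp only [hc]
    linarith
  have hcsum : ∑ i, c i = 0 := by
    simp only [hc]
    rw [Finset.sum_sub_distrib, sum_tilZ k hk0, sum_tilZ k hk0, sub_self]
  obtain ⟨cn, hcn⟩ : ∃ cn : ℕ → ℝ, cn = fun t => if h : t < k then c ⟨t, h⟩ else c ⟨k-1, hkm⟩ := ⟨_, rfl⟩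
  have hcnF : ∀ i : Fin k, cn (i:ℕ) = c i := by
    intro i; simp [hcn, i.isLt]
  have hcnanti : ∀ s t : ℕ, s ≤ t → cn t ≤ cn s := by
    intro s t hst
    by_cases ht : t < k
    · have hs : s < k := lt_of_le_of_lt hst ht
      simp only [hcn, dif_pos ht, dif_pos hs]
      exact hcd ⟨s,hs⟩ ⟨t,ht⟩ hst
    · by_cases hs : s < k
      · simp only [hcn, dif_neg ht, dif_pos hs]
        exact hcd ⟨s,hs⟩ ⟨k-1,hkm⟩ (by simp; omega)
      · simp only [hcn, dif_neg ht, dif_neg hs]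
        exact le_refl _
  have hcnk : cn k = cn (k-1) := by
    simp only [hcn, dif_neg (lt_irrefl k), dif_pos hkm]
  obtain ⟨d, hdd⟩ : ∃ d : ℕ → ℝ, d = fun j => cn j - cn (j+1) := ⟨_, rfl⟩
  have hd0 : ∀ j, 0 ≤ d j := by
    intro j; rw [hdd]; exact sub_nonneg.mpr (hcnanti j (j+1) (by omega))
  obtain ⟨a, ha⟩ : ∃ a : ℝ, a = cn 0 := ⟨_, rfl⟩
  obtain ⟨b, hb⟩ : ∃ b : ℝ, b = -cn (k-1) := ⟨_, rfl⟩
  have hcnsum : ∑ t ∈ Finset.range k, cn t = 0 := by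
    rw [← Fin.sum_univ_eq_sum_range cn k]
    rw [Finset.sum_congr rfl (fun i _ => hcnF i)]
    exact hcsum
  -- Abel application 1: g = 1
  have hA1 := abelSum cn (fun _ => (1:ℝ)) k
  simp only [mul_one, Finset.sum_const, Finset.card_range, nsmul_eq_mul] at hA1
  rw [hcnsum] at hA1
  push_cast at hA1
  have hb1 : ∑ j ∈ Finset.range k, d j * ((j:ℝ)+1) = (k:ℝ) * b := by
    have : ∑ j ∈ Finset.range k, (cn j - cn (j+1)) * ((j:ℝ)+1)
        = ∑ j ∈ Finset.range k, d j * ((j:ℝ)+1) := by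
      exact Finset.sum_congr rfl (fun j _ => by rw [hdd])
    rw [this] at hA1
    rw [hcnk] at hA1
    rw [hb]
    linarith
  -- Abel application 2: g = indicator of 0
  have hA2 := abelSum cn (fun t => if t = 0 then (1:ℝ) else 0) k
  simp only [mul_ite, mul_one, mul_zero, Finset.sum_ite_eq', Finset.mem_range,
    hk0, if_true, Nat.succ_pos] at hA2
  have had : ∑ j ∈ Finset.range k, d j = a + b := by
    have e : ∑ x ∈ Finset.range k, (cn x - cn (x+1)) = ∑ j ∈ Finset.range k, d j :=
      Finset.sum_congr rfl (fun j _ => by rw [hdd])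
    rw [e, hcnk] at hA2
    rw [ha, hb]; linarith
  -- Abel application 3: g = v, v t = (k-1)/2 - t
  have hG : ∀ m:ℕ, ∑ i ∈ Finset.range m, (((k:ℝ)-1)/2 - (i:ℝ)) = (m:ℝ)*((k:ℝ)-(m:ℝ))/2 := by
    intro m
    rw [Finset.sum_sub_distrib, Finset.sum_const, Finset.card_range, nsmul_eq_mul, sum_id]
    ring
  obtain ⟨T, hT⟩ : ∃ T : ℝ, T = ∑ i ∈ Finset.range k, cn i * (((k:ℝ)-1)/2 - (i:ℝ)) := ⟨_, rfl⟩
  have hA3 := abelSum cn (fun t => ((k:ℝ)-1)/2 - (t:ℝ)) k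
  simp only [hG] at hA3
  push_cast at hA3
  have hT3 : 2*T = ∑ j ∈ Finset.range k, d j * (((j:ℝ)+1) * ((k:ℝ)-1-(j:ℝ))) := by
    rw [hT, hA3]
    simp only [sub_self, mul_zero, zero_div, zero_add, Finset.mul_sum]
    exact Finset.sum_congr rfl (fun j _ => by simp only [hdd]; ring)
  have hka : (k:ℝ) * a = ∑ j ∈ Finset.range k, d j * ((k:ℝ)-1-(j:ℝ)) := by
    have h1 : (k:ℝ)*a = (k:ℝ)*(a+b) - (k:ℝ)*b := by ring
    rw [h1, ← had, ← hb1, Finset.mul_sum, ← Finset.sum_sub_distrib]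
    exact Finset.sum_congr rfl (fun j _ => by ring)
  have hjk : ∀ j ∈ Finset.range k, (j:ℝ) ≤ (k:ℝ)-1 := by
    intro j hj
    rw [Finset.mem_range] at hj
    have : (j:ℝ) + 1 ≤ (k:ℝ) := by exact_mod_cast hj
    linarith
  have h2Ta : (k:ℝ)*a ≤ 2*T := by
    rw [hka, hT3]
    apply Finset.sum_le_sum
    intro j hj
    have h1 := hjk j hj
    nlinarith [mul_nonneg (mul_nonneg (hd0 j) (Nat.cast_nonneg (α := ℝ) j))
      (by linarith : (0:ℝ) ≤ (k:ℝ)-1-(j:ℝ))]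
  have hdk1 : d (k-1) = 0 := by
    have : k - 1 + 1 = k := by omega
    simp only [hdd, this, hcnk, sub_self]
  have h2Tb : (k:ℝ)*b ≤ 2*T := by
    rw [← hb1, hT3]
    apply Finset.sum_le_sum
    intro j hj
    by_cases hje : j = k - 1
    · rw [hje, hdk1]; simp
    · have hj2 : j + 2 ≤ k := by rw [Finset.mem_range] at hj; omega
      have h2 : (j:ℝ) + 2 ≤ (k:ℝ) := by exact_mod_cast hj2
      nlinarith [mul_nonneg (mul_nonneg (hd0 j) (by positivity : (0:ℝ) ≤ (j:ℝ)+1))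
        (by linarith : (0:ℝ) ≤ (k:ℝ)-2-(j:ℝ))]
  -- decomposition of Kq
  have hpt : ∀ i : Fin k, tilZ k I i = (((k:ℝ)-1)/2 - ((i:ℕ):ℝ)) + c i := by
    intro i
    simp only [hc]
    rw [tilZ_I0 k hk0 i]
    ring
  have hsq0 : ∑ i : Fin k, (((k:ℝ)-1)/2 - ((i:ℕ):ℝ))^2 = (k:ℝ)*((k:ℝ)^2-1)/12 := by
    rw [Fin.sum_univ_eq_sum_range (fun i => (((k:ℝ)-1)/2 - (i:ℝ))^2) k]
    have e : ∀ i:ℕ, (((k:ℝ)-1)/2 - (i:ℝ))^2 = (((k:ℝ)-1)/2)^2 - ((k:ℝ)-1)*(i:ℝ) + (i:ℝ)^2 :=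
      fun i => by ring
    rw [Finset.sum_congr rfl (fun i _ => e i), Finset.sum_add_distrib, Finset.sum_sub_distrib,
      Finset.sum_const, Finset.card_range, nsmul_eq_mul, ← Finset.mul_sum, sum_id, sum_sq]
    ring
  have hTv : ∑ i : Fin k, ((((k:ℝ)-1)/2 - ((i:ℕ):ℝ)) * c i) = T := by
    rw [hT, ← Fin.sum_univ_eq_sum_range (fun t => cn t * (((k:ℝ)-1)/2 - (t:ℝ))) k]
    exact Finset.sum_congr rfl (fun i _ => by rw [hcnF i]; ring)
  have hdecomp : Kq k (tilZ k I) = 2*T + ∑ i, (c i)^2 := by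
    rw [Kq]
    have e : ∀ i : Fin k, (tilZ k I i)^2 = (((k:ℝ)-1)/2 - ((i:ℕ):ℝ))^2
        + 2*((((k:ℝ)-1)/2 - ((i:ℕ):ℝ)) * c i) + (c i)^2 := by
      intro i; rw [hpt i]; ring
    rw [Finset.sum_congr rfl (fun i _ => e i), Finset.sum_add_distrib, Finset.sum_add_distrib,
      hsq0, ← Finset.mul_sum, hTv]
    ring
  have hs2 : ∀ i0 : Fin k, (c i0)^2 ≤ ∑ i, (c i)^2 :=
    fun i0 => Finset.single_le_sum (fun i _ => sq_nonneg (c i)) (Finset.mem_univ i0)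
  have haF : a = c ⟨0, hk0⟩ := by
    rw [ha]; simpa using hcnF ⟨0, hk0⟩
  have hbF : b = -c ⟨k-1, hkm⟩ := by
    rw [hb]; have := hcnF ⟨k-1, hkm⟩; simp at this; rw [this]
  have hc0 : ∀ i : Fin k, c i ≤ c ⟨0, hk0⟩ := fun i => hcd ⟨0, hk0⟩ i (by simp)
  have hck : ∀ i : Fin k, c ⟨k-1, hkm⟩ ≤ c i := fun i => hcd i ⟨k-1, hkm⟩ (by
    have := i.isLt; simp; omega)
  have habpos : 0 < a + b := by
    rcases eq_or_lt_of_le (hck ⟨0, hk0⟩) with heq | hlt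
    · exfalso
      apply hne
      have hall : ∀ i : Fin k, c i = c ⟨0, hk0⟩ := fun i =>
        le_antisymm (hc0 i) (heq ▸ hck i)
      have hk0' : (k:ℝ) * c ⟨0, hk0⟩ = 0 := by
        rw [← hcsum, Finset.sum_congr rfl (fun i _ => hall i)]
        simp [Finset.card_univ, mul_comm]
      have hc00 : c ⟨0, hk0⟩ = 0 := by
        rcases mul_eq_zero.mp hk0' with h | h
        · exact absurd h (by positivity)
        · exact h
      funext i
      have hi := hall i
      rw [hc00, hc] at hi
      simp only [] at hi
      linarith [hi]
    · rw [haF, hbF]; linarith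
  have hab1 : 1 ≤ a + b := by
    have hz : a + b = ((I ⟨0, hk0⟩ - I ⟨k-1, hkm⟩ - ((k:ℤ)-1) : ℤ) : ℝ) := by
      rw [haF, hbF]
      simp only [hc]
      rw [tilZ_I0 k hk0 ⟨0, hk0⟩, tilZ_I0 k hk0 ⟨k-1, hkm⟩]
      simp only [tilZ]
      push_cast [Nat.cast_sub (by omega : 1 ≤ k)]
      ring
    have : (0:ℝ) < ((I ⟨0, hk0⟩ - I ⟨k-1, hkm⟩ - ((k:ℤ)-1) : ℤ) : ℝ) := hz ▸ habpos
    have hzpos : 0 < (I ⟨0, hk0⟩ - I ⟨k-1, hkm⟩ - ((k:ℤ)-1) : ℤ) := by exact_mod_cast this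
    have : (1:ℤ) ≤ I ⟨0, hk0⟩ - I ⟨k-1, hkm⟩ - ((k:ℤ)-1) := hzpos
    rw [hz]
    exact_mod_cast this
  -- the two symmetric cases
  have hnormb : ∀ M : ℝ, (∀ i : Fin k, -M ≤ c i ∧ c i ≤ M) → 0 ≤ M →
      ‖tilZ k I‖ ≤ ((k:ℝ)-1)/2 + M := by
    intro M hM hM0
    apply (pi_norm_le_iff_of_nonneg (by linarith)).mpr
    intro i
    rw [Real.norm_eq_abs, abs_le]
    have h1 := hpt i
    have hi0 : (0:ℝ) ≤ ((i:ℕ):ℝ) := Nat.cast_nonneg _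
    have hi1 : ((i:ℕ):ℝ) ≤ (k:ℝ)-1 := by
      have : (i:ℕ) + 1 ≤ k := i.isLt
      have : ((i:ℕ):ℝ) + 1 ≤ (k:ℝ) := by exact_mod_cast this
      linarith
    obtain ⟨hl, hr⟩ := hM i
    constructor
    · rw [h1]; linarith
    · rw [h1]; linarith
  have hcb : c ⟨k-1, hkm⟩ = -b := by rw [hb]; rw [← hcnF ⟨k-1, hkm⟩]; simp
  have hfin : ∀ M : ℝ, 1/2 ≤ M → (k:ℝ)*M + M^2 ≤ Kq k (tilZ k I) →
      ‖tilZ k I‖ ≤ ((k:ℝ)-1)/2 + M → ‖tilZ k I‖ ^ 2 ≤ (k : ℝ) * Kq k (tilZ k I) := by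
    intro M hM hK hnb
    have hN2 : ‖tilZ k I‖^2 ≤ (((k:ℝ)-1)/2 + M)^2 :=
      pow_le_pow_left₀ (norm_nonneg _) hnb 2
    nlinarith [mul_le_mul_of_nonneg_left hK (by linarith : (0:ℝ) ≤ (k:ℝ)),
      mul_nonneg (by linarith : (0:ℝ) ≤ M - 1/2)
        (by nlinarith [sq_nonneg ((k:ℝ)-1)] : (0:ℝ) ≤ (k:ℝ)^2 - (k:ℝ) + 1),
      mul_nonneg (by nlinarith [hM] : (0:ℝ) ≤ M^2 - 1/4) (by linarith : (0:ℝ) ≤ (k:ℝ) - 1)]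
  rcases le_total b a with hba | hba
  · apply hfin a (by linarith)
    · rw [hdecomp]
      have h2 := hs2 ⟨0, hk0⟩
      rw [← haF] at h2
      linarith [h2Ta]
    · apply hnormb a _ (by linarith)
      intro i
      constructor
      · have h3 := hck i; rw [hcb] at h3; linarith
      · have h3 := hc0 i; rw [← haF] at h3; exact h3
  · apply hfin b (by linarith)
    · rw [hdecomp]
      have h2 := hs2 ⟨k-1, hkm⟩
      rw [hcb] at h2
      have : b^2 ≤ ∑ i, (c i)^2 := by calc b^2 = (-b)^2 := by ring
                                       _ ≤ _ := h2
      linarith [h2Tb]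
    · apply hnormb b _ (by linarith)
      intro i
      constructor
      · have h3 := hck i; rw [hcb] at h3; linarith
      · have h3 := hc0 i; rw [← haF] at h3; linarith


lemma hexc_bounds (k : ℕ) (hk : 2 ≤ k) (J : Fin k → ℤ)
    (hJ : ∀ i j : Fin k, i < j → J j < J i) :
    0 ≤ ((hexc k J : ℤ) : ℝ) ∧
    ((hexc k J : ℤ) : ℝ) ≤ (k:ℝ) * Real.sqrt (∑ i, (tilZ k J i)^2) := by
  have hk0 : 0 < k := by omega
  have hkm : k - 1 < k := by omega
  have hkR : (0:ℝ) < (k:ℝ) := by positivity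
  have hkR1 : (1:ℝ) ≤ (k:ℝ) := by exact_mod_cast hk0
  have hlast : lastE k J = J ⟨k-1, hkm⟩ := by rw [lastE, dif_pos hk0]
  have h1 : ((hexc k J : ℤ) : ℝ) = -(k:ℝ) * (tilZ k J ⟨k-1, hkm⟩) - (k:ℝ)*((k:ℝ)-1)/2 := by
    rw [hexc, hlast]
    push_cast
    rw [szI0_real, tilZ]
    field_simp
    ring
  have hgap : ∀ i : Fin k, J ⟨k-1, hkm⟩ + ((k:ℤ)-1-((i:ℕ):ℤ)) ≤ J i := by
    intro i
    have h2 := gap' hJ i ⟨k-1, hkm⟩ (by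
      have h := i.isLt; show (i:ℕ) ≤ k-1; omega)
    have h3 : (((k-1:ℕ):ℤ)) = (k:ℤ)-1 := by
      push_cast [Nat.cast_sub (by omega : 1 ≤ k)]; ring
    rw [show ((⟨k-1, hkm⟩ : Fin k):ℕ) = k-1 from rfl, h3] at h2
    omega
  have hsum : (k:ℤ) * J ⟨k-1, hkm⟩ + sz k (I0 k) ≤ sz k J := by
    have h2 := Finset.sum_le_sum (s := (Finset.univ : Finset (Fin k)))
      (f := fun i : Fin k => J ⟨k-1, hkm⟩ + ((k:ℤ)-1-((i:ℕ):ℤ)))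
      (g := J) (fun i _ => hgap i)
    rw [Finset.sum_add_distrib, Finset.sum_const, Finset.card_univ, Fintype.card_fin,
      nsmul_eq_mul] at h2
    have e : ∑ i : Fin k, ((k:ℤ)-1-((i:ℕ):ℤ)) = sz k (I0 k) := by
      rw [sz]
      exact Finset.sum_congr rfl (fun i _ => by simp only [I0])
    rw [e] at h2
    simp only [sz]
    exact h2
  have h2 : tilZ k J ⟨k-1, hkm⟩ ≤ -(((k:ℝ)-1)/2) := by
    have hc : ((k:ℤ) * J ⟨k-1,hkm⟩ : ℤ) + (sz k (I0 k):ℤ) ≤ sz k J := hsum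
    have hcr : (k:ℝ) * ((J ⟨k-1,hkm⟩ : ℤ):ℝ) + ((sz k (I0 k):ℤ):ℝ) ≤ ((sz k J:ℤ):ℝ) := by
      exact_mod_cast hc
    rw [szI0_real] at hcr
    rw [tilZ]
    have hd : ((J ⟨k-1,hkm⟩:ℤ):ℝ) + ((k:ℝ)-1)/2 ≤ ((sz k J:ℤ):ℝ)/(k:ℝ) := by
      rw [le_div_iff₀ hkR]
      nlinarith [hcr]
    linarith
  have hL : |tilZ k J ⟨k-1,hkm⟩| ≤ Real.sqrt (∑ i, (tilZ k J i)^2) := by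
    rw [← Real.sqrt_sq_eq_abs]
    apply Real.sqrt_le_sqrt
    exact Finset.single_le_sum (f := fun i => (tilZ k J i)^2)
      (fun i _ => sq_nonneg _) (Finset.mem_univ _)
  constructor
  · rw [h1]
    nlinarith [mul_nonneg (le_of_lt hkR)
      (by linarith : (0:ℝ) ≤ -(((k:ℝ)-1)/2) - tilZ k J ⟨k-1,hkm⟩)]
  · rw [h1]
    have h4 := mul_le_mul_of_nonneg_left (le_trans (neg_le_abs _) hL) (le_of_lt hkR)
    nlinarith [h4]

lemma part2 (k n : ℕ) (hk : 2 ≤ k) (p : Conf k n → ℝ)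
    (hp0 : ∀ J, 0 ≤ p J) :
    (∑ J : Conf k n, p J * ((hexc k (cv J) : ℝ)) ^ 3) ≤
      2 * Real.sqrt 2 * (k : ℝ) ^ 3 *
        ∑ J : Conf k n, p J * Real.sqrt (∑ i, (tilZ k (cv J) i) ^ 2) ^ 3 := by
  have hs2 : (1:ℝ) ≤ 2 * Real.sqrt 2 := by
    have h1 : (1:ℝ) ≤ Real.sqrt 2 := by
      rw [show (1:ℝ) = Real.sqrt 1 by rw [Real.sqrt_one]]
      exact Real.sqrt_le_sqrt (by norm_num)
    linarith
  rw [Finset.mul_sum]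
  apply Finset.sum_le_sum
  intro J _
  have hmono : ∀ i j : Fin k, i < j → cv J j < cv J i := by
    intro i j hij
    have h := J.prop i j hij
    rw [Fin.lt_def] at h
    simp only [cv]
    exact_mod_cast h
  obtain ⟨h0, h1⟩ := hexc_bounds k hk (cv J) hmono
  have hL0 : (0:ℝ) ≤ Real.sqrt (∑ i, (tilZ k (cv J) i)^2) := Real.sqrt_nonneg _
  have h3 : ((hexc k (cv J) : ℤ):ℝ)^3 ≤
      (k:ℝ)^3 * (Real.sqrt (∑ i, (tilZ k (cv J) i)^2))^3 := by
    calc ((hexc k (cv J) : ℤ):ℝ)^3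
        ≤ ((k:ℝ) * Real.sqrt (∑ i, (tilZ k (cv J) i)^2))^3 := pow_le_pow_left₀ h0 h1 3
      _ = _ := by ring
  have hk3 : (0:ℝ) ≤ (k:ℝ)^3 := by positivity
  have hx : (0:ℝ) ≤ p J * (Real.sqrt (∑ i, (tilZ k (cv J) i)^2))^3 :=
    mul_nonneg (hp0 J) (pow_nonneg hL0 3)
  have h4 : p J * ((hexc k (cv J) : ℤ):ℝ)^3 ≤
      p J * ((k:ℝ)^3 * (Real.sqrt (∑ i, (tilZ k (cv J) i)^2))^3) :=
    mul_le_mul_of_nonneg_left h3 (hp0 J)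
  nlinarith [mul_nonneg (mul_nonneg (by linarith : (0:ℝ) ≤ 2*Real.sqrt 2 - 1) hk3) hx]


/-- (i) `‖Ĩ‖_∞² ≤ k·K(Ĩ)` for strictly decreasing integer vectors with
`Ĩ ≠ Ĩ_0`; (ii) for a probability weight `p` on `B_{k,n}`,
`Σ_J p(J)⟨Ĵ-I_0⟩³ ≤ 2√2·k³·Σ_J p(J)‖J̃‖₂³`. -/
theorem stmt17 :
    (∀ (k : ℕ) (hk : 2 ≤ k) (I : Fin k → ℤ),
      (∀ i j : Fin k, i < j → I j < I i) →
      tilZ k I ≠ tilZ k (I0 k) →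
      ‖tilZ k I‖ ^ 2 ≤ (k : ℝ) * Kq k (tilZ k I)) ∧
    (∀ (k n : ℕ) (hk : 2 ≤ k) (hkn : k ≤ n) (p : Conf k n → ℝ),
      (∀ J, 0 ≤ p J) → (∀ J, p J ≤ 1) → (∑ J : Conf k n, p J) = 1 →
      (∑ J : Conf k n, p J * ((hexc k (cv J) : ℝ)) ^ 3) ≤
        2 * Real.sqrt 2 * (k : ℝ) ^ 3 *
          ∑ J : Conf k n, p J * Real.sqrt (∑ i, (tilZ k (cv J) i) ^ 2) ^ 3) := by
  constructor
  · exact part1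
  · intro k n hk hkn p hp0 hp1 hsum
    exact part2 k n hk p hp0

end Paper
end
end
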